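/- Let (X, p̄) be a stratified perverse space. Equip ℝ × X with the product filtration and the perversity (still denoted p̄) pulled back along the projection. Then for each fixed z ∈ ℝ the inclusion ι_z : X → ℝ × X, x ↦ (z, x), and the projection p_X : ℝ × X → X, (z,x) ↦ x, induce isomorphisms H_k^{p̄}(ℝ × X;G) ≅ H_k^{p̄}(X;G) for all k. -/

import Mathlib

/-!
The inclusion `ι_z : x ↦ (z, x)` and the projection `π` pull the filtrations back onto each other,
so they send a filtered simplex to a filtered simplex with the same join decomposition; as the
strata of `ℝ × X` are the `ℝ × S`, admissibility in `ℝ × X` is read off the `X`-component. Hence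
both induce chain maps of intersection chains. On filtered chains `π ∘ ι_z` is the identity, and
`ι_z ∘ π` is chain homotopic to the identity: triangulating the prism `Δⁿ × [0, 1]` and composing
with the straight-line homotopy `((t, x), s) ↦ ((1 - s) t + s z, x)` gives an operator `P` with
`∂P + P∂ = ι_z π - id`. The prism simplices factor through the affine degeneracies `Δⁿ⁺¹ → Δⁿ`,
which lower the number of nonzero barycentric coordinates by at most one, so they stay admissible.
-/

noncomputable section
open Set

universe u v w


/-- A filtered space of formal dimension `dim` : closed subspaces
`∅ = X_{-1} ⊆ X_0 ⊆ … ⊆ X_n = X` with `X_n \ X_{n-1} ≠ ∅`. -/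
structure FilteredSpace (X : Type u) [TopologicalSpace X] : Type u where
  dim : ℕ
  filt : ℤ → Set X
  filt_neg : ∀ i : ℤ, i < 0 → filt i = ∅
  filt_mono : Monotone filt
  filt_closed : ∀ i, IsClosed (filt i)
  filt_top : ∀ i : ℤ, (dim : ℤ) ≤ i → filt i = Set.univ
  reg_nonempty : (filt dim \ filt ((dim : ℤ) - 1)).Nonempty

namespace FilteredSpace

variable {X : Type u} {Y : Type v} [TopologicalSpace X] [TopologicalSpace Y]

/-- `S` is a stratum of formal dimension `i` : a connected component of `X_i \ X_{i-1}`. -/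
def IsStratumDim (F : FilteredSpace X) (S : Set X) (i : ℤ) : Prop :=
  ∃ x ∈ F.filt i \ F.filt (i-1), S = connectedComponentIn (F.filt i \ F.filt (i-1)) x

/-- `S` is a stratum of the filtered space. -/
def IsStratum (F : FilteredSpace X) (S : Set X) : Prop := ∃ i, F.IsStratumDim S i

open Classical in
/-- The formal dimension of a stratum. -/
def stratumDim (F : FilteredSpace X) (S : Set X) : ℤ :=
  if h : ∃ i, F.IsStratumDim S i then h.choose else 0

/-- The codimension of a stratum : `dim X - dim S`. -/
def codim (F : FilteredSpace X) (S : Set X) : ℤ := (F.dim : ℤ) - F.stratumDim S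

/-- A regular stratum : one contained in `X_n \ X_{n-1}`. -/
def IsRegularStratum (F : FilteredSpace X) (S : Set X) : Prop :=
  F.IsStratumDim S (F.dim : ℤ)

/-- A singular stratum. -/
def IsSingularStratum (F : FilteredSpace X) (S : Set X) : Prop :=
  F.IsStratum S ∧ ¬ F.IsRegularStratum S

/-- The singular set `Σ = X_{n-1}`. -/
def sing (F : FilteredSpace X) : Set X := F.filt ((F.dim : ℤ) - 1)

/-- A perversity on a filtered space : a function on strata (here, defined on all
subsets) vanishing on regular strata. -/
def IsPerversity (F : FilteredSpace X) (p : Set X → ℤ) : Prop :=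
  ∀ S, F.IsRegularStratum S → p S = 0

/-- The top perversity `t̄ (S) = codim S - 2`. -/
def topPerv (F : FilteredSpace X) : Set X → ℤ := fun S => F.codim S - 2

open Classical in
/-- The dual perversity `D p̄ = t̄ - p̄` (vanishing on regular strata). -/
def dualPerv (F : FilteredSpace X) (p : Set X → ℤ) : Set X → ℤ :=
  fun S => if F.IsRegularStratum S then 0 else F.codim S - 2 - p S

/-- A stratified map between filtered spaces: each stratum of the source is sent into
a stratum of the target of smaller or equal codimension. -/
def IsStratifiedMap (F : FilteredSpace X) (F' : FilteredSpace Y) (f : X → Y) : Prop :=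
  Continuous f ∧
    ∀ S, F.IsStratum S → ∃ T, F'.IsStratum T ∧ f '' S ⊆ T ∧ F'.codim T ≤ F.codim S

end FilteredSpace

/-! ## Topological simplices, filtered simplices -/

/-- The standard topological `m`-simplex. -/
abbrev TSimp (m : ℕ) : Set (Fin (m+1) → ℝ) := stdSimplex ℝ (Fin (m+1))

/-- The number of nonzero barycentric coordinates of a point of the `m`-simplex;
`t` belongs to the `d`-skeleton iff `suppCard t ≤ d + 1`. -/
def suppCard {m : ℕ} (t : TSimp m) : ℕ :=
  @Finset.card _ (@Finset.filter _ (fun j => (t : Fin (m+1) → ℝ) j ≠ 0)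
    (Classical.decPred _) Finset.univ)

/-- The `j`-th face embedding of standard simplices. -/
def faceMap (m : ℕ) (j : Fin (m+2)) : C(TSimp m, TSimp (m+1)) where
  toFun t := ⟨Fin.insertNth j 0 t.1, by
    refine ⟨fun k => ?_, ?_⟩
    · refine Fin.succAboveCases j ?_ ?_ k
      · rw [Fin.insertNth_apply_same]
      · intro l; rw [Fin.insertNth_apply_succAbove]; exact t.2.1 l
    · rw [Fin.sum_univ_succAbove _ j, Fin.insertNth_apply_same]
      simp only [Fin.insertNth_apply_succAbove]
      rw [zero_add]; exact t.2.2⟩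
  continuous_toFun := by
    apply Continuous.subtype_mk
    exact continuous_const.finInsertNth j continuous_subtype_val

/-- The `j`-th vertex of the standard `m`-simplex. -/
def vert (m : ℕ) (j : Fin (m+1)) : TSimp m :=
  ⟨fun i => if i = j then 1 else 0, by
    refine ⟨fun k => ?_, ?_⟩
    · dsimp only; split <;> norm_num
    · classical
      simp [Finset.sum_ite_eq']⟩


/-! ## Generic homology of constraint systems on chain groups -/

section generic

variable {C : ℕ → Type w} [∀ m, AddCommGroup (C m)]
variable {D : ℕ → Type v} [∀ m, AddCommGroup (D m)]

/-- Relative cycles: chains of `A` whose boundary lies in `B`. -/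
def relCycles (d : ∀ m, C m →+ C (m-1)) (A B : ∀ m, AddSubgroup (C m)) (m : ℕ) :
    AddSubgroup (C m) :=
  A m ⊓ (B (m-1)).comap (d m)

/-- Relative boundaries: boundaries of chains of `A`, together with chains of `B`. -/
def relBnds (d : ∀ m, C m →+ C (m-1)) (A B : ∀ m, AddSubgroup (C m)) (m : ℕ) :
    AddSubgroup (C m) :=
  (A (m+1)).map (d (m+1)) ⊔ B m

/-- Relative homology of the pair of constraint systems `(A, B)`. -/
abbrev relHomology (d : ∀ m, C m →+ C (m-1)) (A B : ∀ m, AddSubgroup (C m)) (m : ℕ) :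
    Type w :=
  relCycles d A B m ⧸
    ((relBnds d A B m ⊓ relCycles d A B m).addSubgroupOf (relCycles d A B m))

/-- The homology class of a relative cycle. -/
def hcl (d : ∀ m, C m →+ C (m-1)) (A B : ∀ m, AddSubgroup (C m)) {m : ℕ}
    (ξ : C m) (h : ξ ∈ relCycles d A B m) : relHomology d A B m :=
  QuotientAddGroup.mk (⟨ξ, h⟩ : relCycles d A B m)

/-- `f` induces an isomorphism in homology, compatibly with classes of cycles. -/
def InducesIso (d : ∀ m, C m →+ C (m-1)) (A B : ∀ m, AddSubgroup (C m))
    (d' : ∀ m, D m →+ D (m-1)) (A' B' : ∀ m, AddSubgroup (D m)) (m : ℕ)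
    (f : C m →+ D m) : Prop :=
  ∃ φ : relHomology d A B m ≃+ relHomology d' A' B' m,
    ∀ (ξ : C m) (h : ξ ∈ relCycles d A B m) (h' : f ξ ∈ relCycles d' A' B' m),
      φ (hcl d A B ξ h) = hcl d' A' B' (f ξ) h'

/-- The homomorphism induced in homology by an inclusion of constraint systems. -/
def inclInduced (d : ∀ m, C m →+ C (m-1)) (A B A' B' : ∀ m, AddSubgroup (C m))
    (hA : ∀ m, A m ≤ A' m) (hB : ∀ m, B m ≤ B' m) (m : ℕ) :
    relHomology d A B m →+ relHomology d A' B' m := by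
  have hZ : relCycles d A B m ≤ relCycles d A' B' m := by
    rintro ξ ⟨h1, h2⟩
    exact ⟨hA _ h1, hB _ h2⟩
  refine QuotientAddGroup.map _ _ (AddSubgroup.inclusion hZ) ?_
  intro x hx
  rw [AddSubgroup.mem_addSubgroupOf] at hx
  rw [AddSubgroup.mem_comap, AddSubgroup.mem_addSubgroupOf, AddSubgroup.coe_inclusion]
  refine ⟨?_, hZ x.2⟩
  exact (sup_le_sup (AddSubgroup.map_mono (hA _)) (hB _) : _ ≤ relBnds d A' B' m) hx.1

end generic

/-! ## Filtered simplices and their chain complexes -/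

/-- A simplex of `X` together with a block assignment of its vertices:
a candidate filtered simplex, the blocks recording the join decomposition
`Δ = Δ_0 ∗ ⋯ ∗ Δ_n`. -/
structure PreSimplex (X : Type u) [TopologicalSpace X] (m : ℕ) : Type u where
  map : C(TSimp m, X)
  block : Fin (m+1) → ℤ

variable {X : Type u} {Y : Type v} [TopologicalSpace X] [TopologicalSpace Y]

/-- The `j`-th face of a pre-simplex. -/
def PreSimplex.face {m : ℕ} (σ : PreSimplex X (m+1)) (j : Fin (m+2)) : PreSimplex X m :=
  ⟨σ.map.comp (faceMap m j), σ.block ∘ j.succAbove⟩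

/-- A generator system for chain complexes: generators and face operators. -/
structure SimpSystem : Type (u+1) where
  Gen : ℕ → Type u
  face : ∀ m : ℕ, Fin (m+2) → Gen (m+1) → Gen m

/-- The system of pre-filtered simplices of `X`. -/
abbrev filtSys (X : Type u) [TopologicalSpace X] : SimpSystem.{u} where
  Gen m := PreSimplex X m
  face _ j σ := σ.face j

/-- The system of all singular simplices of `X`. -/
abbrev singSys (X : Type u) [TopologicalSpace X] : SimpSystem.{u} where
  Gen m := C(TSimp m, X)
  face m j σ := σ.comp (faceMap m j)

namespace SimpSystem

variable (S : SimpSystem.{u}) (G : Type w) [AddCommGroup G]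

/-- Chains on the generators of `S`, with coefficients in `G`. -/
abbrev Chains (m : ℕ) : Type _ := S.Gen m →₀ G

/-- The boundary operator. -/
def bdry (m : ℕ) : S.Chains G (m+1) →+ S.Chains G m :=
  Finsupp.liftAddHom fun σ =>
    ∑ j : Fin (m+2), (-1 : ℤ) ^ (j : ℕ) • Finsupp.singleAddHom (S.face m j σ)

/-- The boundary operator, vanishing in degree `0`. -/
def bdryFrom : ∀ m : ℕ, S.Chains G m →+ S.Chains G (m-1)
  | 0 => 0
  | (m+1) => S.bdry G m

/-- The subgroup of chains all of whose simplices satisfy `P`. -/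
def suppIn {m : ℕ} (P : S.Gen m → Prop) : AddSubgroup (S.Chains G m) where
  carrier := {ξ | ∀ σ ∈ ξ.support, P σ}
  zero_mem' := by intro σ h; simp at h
  add_mem' := by
    classical
    intro a b ha hb σ h
    rcases Finset.mem_union.mp (Finsupp.support_add h) with h' | h'
    exacts [ha σ h', hb σ h']
  neg_mem' := by
    intro a ha σ h
    rw [Finsupp.support_neg] at h
    exact ha σ h

end SimpSystem

/-! ## Admissibility -/

/-- A singular simplex is `p`-admissible when, for every stratum `S`, the preimage
of `S` is contained in the skeleton of dimension `dim Δ - codim S + p S`. -/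
def MapAdmissible (F : FilteredSpace X) (p : Set X → ℤ) {m : ℕ} (τ : C(TSimp m, X)) : Prop :=
  ∀ S : Set X, F.IsStratum S → ∀ t : TSimp m, τ t ∈ S →
    (suppCard t : ℤ) ≤ (m : ℤ) - F.codim S + p S + 1

/-- A pre-simplex is a filtered simplex when its blocks are monotone and detect the
filtration: `σ⁻¹(X_i) = Δ_0 ∗ ⋯ ∗ Δ_i`. -/
def PreSimplex.IsFiltered (F : FilteredSpace X) {m : ℕ} (σ : PreSimplex X m) : Prop :=
  Monotone σ.block ∧
    ∀ i : ℤ, σ.map ⁻¹' (F.filt i) =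
      {t : TSimp m | ∀ j, (t : Fin (m+1) → ℝ) j ≠ 0 → σ.block j ≤ i}

/-- `p`-admissibility of a pre-simplex. -/
def PreSimplex.Admissible (F : FilteredSpace X) (p : Set X → ℤ) {m : ℕ}
    (σ : PreSimplex X m) : Prop :=
  MapAdmissible F p σ.map

/-- The allowable simplices of the `p`-intersection complex with support in the
region `W` : filtered, `p`-admissible, with image contained in `W`. -/
def Allowable (F : FilteredSpace X) (p : Set X → ℤ) (W : Set X) {m : ℕ}
    (σ : PreSimplex X m) : Prop :=
  σ.IsFiltered F ∧ σ.Admissible F p ∧ Set.range σ.map ⊆ W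

/-- The complex `C_*^{p̄}` of `p`-intersection chains (of filtered simplices),
with support in the region `W` : chains `ξ` such that every simplex of `ξ` and of
`∂ξ` is `p`-admissible (and carried by `W`). -/
def iChains (F : FilteredSpace X) (p : Set X → ℤ) (G : Type w) [AddCommGroup G]
    (W : Set X) (m : ℕ) : AddSubgroup ((filtSys X).Chains G m) :=
  (filtSys X).suppIn G (fun σ : PreSimplex X m => Allowable F p W σ) ⊓
    ((filtSys X).suppIn G (fun σ : PreSimplex X (m-1) => Allowable F p W σ)).comap
      ((filtSys X).bdryFrom G m)

/-- Intersection homology `H_*^{p̄}` of the part of `X` carried by the region `W`,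
relative to the region `W'` (absolute case: `W = univ`, `W' = ∅`). -/
abbrev iH (F : FilteredSpace X) (p : Set X → ℤ) (G : Type w) [AddCommGroup G]
    (W W' : Set X) (m : ℕ) : Type _ :=
  relHomology ((filtSys X).bdryFrom G) (fun k => iChains F p G W k)
    (fun k => iChains F p G W' k) m

/-- MacPherson's complex `I^{p̄}C_*` of singular intersection chains: all singular
simplices, `p̄`-admissibility as above. -/
def mChains (F : FilteredSpace X) (p : Set X → ℤ) (G : Type w) [AddCommGroup G]
    (m : ℕ) : AddSubgroup ((singSys X).Chains G m) :=
  (singSys X).suppIn G (fun τ : C(TSimp m, X) => MapAdmissible F p τ) ⊓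
    ((singSys X).suppIn G (fun τ : C(TSimp (m-1), X) => MapAdmissible F p τ)).comap
      ((singSys X).bdryFrom G m)

/-- The subcomplex of singular chains carried by `W`. -/
def sChains (X : Type u) [TopologicalSpace X] (G : Type w) [AddCommGroup G]
    (W : Set X) (m : ℕ) : AddSubgroup ((singSys X).Chains G m) :=
  (singSys X).suppIn G (fun τ : C(TSimp m, X) => Set.range τ ⊆ W)

/-- Singular homology of the pair of regions `(W, W')` of `X`. -/
abbrev sH (X : Type u) [TopologicalSpace X] (G : Type w) [AddCommGroup G]
    (W W' : Set X) (m : ℕ) : Type _ :=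
  relHomology ((singSys X).bdryFrom G) (fun k => sChains X G W k)
    (fun k => sChains X G W' k) m

/-! ## Pushforwards -/

/-- The canonical block assignment of a singular simplex of a filtered space:
the vertex `j` is assigned the lowest filtration level containing its image. -/
def canonicalBlock (F : FilteredSpace Y) {m : ℕ} (τ : C(TSimp m, Y)) : Fin (m+1) → ℤ :=
  fun j => sInf {i : ℤ | τ (vert m j) ∈ F.filt i}

/-- Pushforward of a pre-simplex along a continuous map, with the canonical blocks
of the target filtration. -/
def pushSimp (F' : FilteredSpace Y) (g : C(X, Y)) {m : ℕ} (σ : PreSimplex X m) :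
    PreSimplex Y m :=
  ⟨g.comp σ.map, canonicalBlock F' (g.comp σ.map)⟩

/-- Pushforward of chains along a continuous map (`σ ↦ f ∘ σ`). -/
def pushChain (F' : FilteredSpace Y) (g : C(X, Y)) (G : Type w) [AddCommGroup G]
    (m : ℕ) : (filtSys X).Chains G m →+ (filtSys Y).Chains G m :=
  Finsupp.mapDomain.addMonoidHom (pushSimp F' g)

/-- Forget the blocks: from filtered chains to singular chains. -/
def forgetChain (X : Type u) [TopologicalSpace X] (G : Type w) [AddCommGroup G]
    (m : ℕ) : (filtSys X).Chains G m →+ (singSys X).Chains G m :=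
  Finsupp.mapDomain.addMonoidHom (fun σ : PreSimplex X m => σ.map)

/-- Equip singular chains with canonical blocks. -/
def withBlocks (F : FilteredSpace X) (G : Type w) [AddCommGroup G] (m : ℕ) :
    (singSys X).Chains G m →+ (filtSys X).Chains G m :=
  Finsupp.mapDomain.addMonoidHom
    (fun τ : C(TSimp m, X) => (⟨τ, canonicalBlock F τ⟩ : PreSimplex X m))

/-! ## Tame (modered) intersection chains -/

/-- A pre-simplex is regular when its last join factor `Δ_n` is nonempty,
i.e. some vertex has block equal to the formal dimension of the space. -/
def PreSimplex.RegularS (F : FilteredSpace X) {m : ℕ} (σ : PreSimplex X m) : Prop :=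
  ∃ j, σ.block j = (F.dim : ℤ)

/-- The subgroup of chains carried by the singular set (all simplices singular). -/
def tSub (F : FilteredSpace X) (G : Type w) [AddCommGroup G] (m : ℕ) :
    AddSubgroup ((filtSys X).Chains G m) :=
  (filtSys X).suppIn G (fun σ : PreSimplex X m => ¬ σ.RegularS F)

/-- The quotient complex `𝔠_* = C_*(X)/C_*(Σ)`. -/
abbrev tChains (F : FilteredSpace X) (G : Type w) [AddCommGroup G] (m : ℕ) : Type _ :=
  (filtSys X).Chains G m ⧸ tSub F G m

/-- The projection onto the tame quotient. -/
def tProj (F : FilteredSpace X) (G : Type w) [AddCommGroup G] (m : ℕ) :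
    (filtSys X).Chains G m →+ tChains F G m :=
  QuotientAddGroup.mk' (tSub F G m)

open Classical in
/-- The regular part `∂_reg` of the boundary: only regular faces are kept. -/
def bdryReg (F : FilteredSpace X) (G : Type w) [AddCommGroup G] (m : ℕ) :
    (filtSys X).Chains G (m+1) →+ (filtSys X).Chains G m :=
  Finsupp.liftAddHom fun σ =>
    ∑ j : Fin (m+2), (-1 : ℤ) ^ (j : ℕ) •
      (if (σ.face j).RegularS F then Finsupp.singleAddHom (σ.face j) else 0)

/-- `∂_reg`, vanishing in degree 0. -/
def bdryRegFrom (F : FilteredSpace X) (G : Type w) [AddCommGroup G] :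
    ∀ m : ℕ, (filtSys X).Chains G m →+ (filtSys X).Chains G (m-1)
  | 0 => 0
  | (m+1) => bdryReg F G m

lemma bdryRegFrom_eq_zero (F : FilteredSpace X) (G : Type w) [AddCommGroup G] (m : ℕ)
    (ξ : (filtSys X).Chains G m) (hξ : ξ ∈ tSub F G m) :
    bdryRegFrom F G m ξ = 0 := by
  classical
  cases m with
  | zero => rfl
  | succ m =>
    show bdryReg F G m ξ = 0
    rw [bdryReg, Finsupp.liftAddHom_apply, Finsupp.sum]
    apply Finset.sum_eq_zero
    intro σ hσ
    have hns : ¬ σ.RegularS F := hξ σ hσ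
    have hface : ∀ j : Fin (m+2), ¬ (σ.face j).RegularS F := by
      intro j hj
      obtain ⟨k, hk⟩ := hj
      exact hns ⟨j.succAbove k, hk⟩
    have hzero : (∑ j : Fin (m+2), (-1 : ℤ) ^ (j : ℕ) •
        (if (σ.face j).RegularS F then Finsupp.singleAddHom (σ.face j) else 0) :
        G →+ (filtSys X).Chains G m) = 0 := by
      apply Finset.sum_eq_zero
      intro j _
      rw [if_neg (hface j), smul_zero]
    rw [hzero]
    rfl

/-- The differential `𝔡` induced by `∂_reg` on the tame quotient. -/
def tBdryFrom (F : FilteredSpace X) (G : Type w) [AddCommGroup G] (m : ℕ) :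
    tChains F G m →+ tChains F G (m-1) :=
  QuotientAddGroup.map _ _ (bdryRegFrom F G m)
    (by
      intro ξ hξ
      rw [AddSubgroup.mem_comap, bdryRegFrom_eq_zero F G m ξ hξ]
      exact zero_mem _)

/-- The classes of `p`-admissible chains in the tame quotient. -/
def tAdm (F : FilteredSpace X) (p : Set X → ℤ) (G : Type w) [AddCommGroup G] (m : ℕ) :
    AddSubgroup (tChains F G m) :=
  ((filtSys X).suppIn G
      (fun σ : PreSimplex X m => σ.IsFiltered F ∧ σ.Admissible F p)).map (tProj F G m)

/-- The tame `p`-intersection complex `𝔠_*^{p̄}` : classes of admissible chains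
whose `𝔡`-boundary is again (the class of) an admissible chain. -/
def tIC (F : FilteredSpace X) (p : Set X → ℤ) (G : Type w) [AddCommGroup G] (m : ℕ) :
    AddSubgroup (tChains F G m) :=
  tAdm F p G m ⊓ (tAdm F p G (m-1)).comap (tBdryFrom F G m)

/-- Tame intersection homology `𝔥_*^{p̄}(X; G)`. -/
abbrev tH (F : FilteredSpace X) (p : Set X → ℤ) (G : Type w) [AddCommGroup G] (m : ℕ) :
    Type _ :=
  relHomology (tBdryFrom F G) (fun k => tIC F p G k) (fun _ => ⊥) m

/-! ## Products with a factor -/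

/-- The product filtration on `M × X` : `(M × X)_i = M × X_i`. -/
def FilteredSpace.prodLeft (M : Type v) [TopologicalSpace M] [Nonempty M]
    (F : FilteredSpace X) : FilteredSpace (M × X) where
  dim := F.dim
  filt i := univ ×ˢ F.filt i
  filt_neg i h := by rw [F.filt_neg i h, Set.prod_empty]
  filt_mono := fun i j h => Set.prod_mono (le_refl _) (F.filt_mono h)
  filt_closed i := isClosed_univ.prod (F.filt_closed i)
  filt_top i h := by rw [F.filt_top i h, Set.univ_prod_univ]
  reg_nonempty := by
    obtain ⟨x, hx1, hx2⟩ := F.reg_nonempty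
    exact ⟨(Classical.arbitrary M, x), ⟨trivial, hx1⟩, fun h => hx2 h.2⟩

/-- The product filtration on `X × M` : `(X × M)_i = X_i × M`. -/
def FilteredSpace.prodRight (M : Type v) [TopologicalSpace M] [Nonempty M]
    (F : FilteredSpace X) : FilteredSpace (X × M) where
  dim := F.dim
  filt i := F.filt i ×ˢ univ
  filt_neg i h := by rw [F.filt_neg i h, Set.empty_prod]
  filt_mono := fun i j h => Set.prod_mono (F.filt_mono h) (le_refl _)
  filt_closed i := (F.filt_closed i).prod isClosed_univ
  filt_top i h := by rw [F.filt_top i h, Set.univ_prod_univ]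
  reg_nonempty := by
    obtain ⟨x, hx1, hx2⟩ := F.reg_nonempty
    exact ⟨(x, Classical.arbitrary M), ⟨hx1, trivial⟩, fun h => hx2 h.1⟩

/-- The perversity induced on `M × X` by a perversity on `X`
(a stratum `M × S` is sent to the value on `S`). -/
def pervProdLeft (p : Set X → ℤ) : Set (M' × X) → ℤ := fun T => p (Prod.snd '' T)

/-- The perversity induced on `X × M` by a perversity on `X`. -/
def pervProdRight (p : Set X → ℤ) : Set (X × M') → ℤ := fun T => p (Prod.fst '' T)

/-! ## The open cone -/

/-- The relation collapsing `L × {0}` in `L × [0,1)`. -/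
def coneSetoid (L : Type u) [TopologicalSpace L] :
    Setoid (L × {t : ℝ // 0 ≤ t ∧ t < 1}) where
  r a b := a = b ∨ (a.2.1 = 0 ∧ b.2.1 = 0)
  iseqv := by
    refine ⟨fun a => Or.inl rfl, ?_, ?_⟩
    · rintro a b (rfl | h)
      exacts [Or.inl rfl, Or.inr ⟨h.2, h.1⟩]
    · rintro a b c (rfl | h) (rfl | h')
      exacts [Or.inl rfl, Or.inr h', Or.inr h, Or.inr ⟨h.1, h'.2⟩]

/-- The open cone `c̊L = L × [0,1) / (L × {0})`. -/
abbrev OpenCone (L : Type u) [TopologicalSpace L] : Type u := Quotient (coneSetoid L)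

/-- The point `[x, t]` of the open cone. -/
def conePt {L : Type u} [TopologicalSpace L] (x : L) (t : {t : ℝ // 0 ≤ t ∧ t < 1}) :
    OpenCone L :=
  Quotient.mk (coneSetoid L) (x, t)

/-- The parameter `0` of the cone. -/
def czero : {t : ℝ // 0 ≤ t ∧ t < 1} := ⟨0, le_refl 0, zero_lt_one⟩

/-- The vertex `𝓌` of the open cone on a (nonempty) filtered space. -/
def coneVertexOf {L : Type u} [TopologicalSpace L] (FL : FilteredSpace L) : OpenCone L :=
  conePt FL.reg_nonempty.choose czero

/-- The cone `c̊A ⊆ c̊L` on a subset `A ⊆ L` (it contains the vertex; `c̊∅ = {𝓌}`). -/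
def coneSet {L : Type u} [TopologicalSpace L] (A : Set L) : Set (OpenCone L) :=
  {z | ∃ x t, z = conePt x t ∧ (t.1 = 0 ∨ x ∈ A)}

lemma coneSet_mono {L : Type u} [TopologicalSpace L] {A B : Set L} (h : A ⊆ B) :
    coneSet A ⊆ coneSet B := by
  rintro z ⟨x, t, rfl, h0 | hA⟩
  exacts [⟨x, t, rfl, Or.inl h0⟩, ⟨x, t, rfl, Or.inr (h hA)⟩]

lemma preimage_coneSet {L : Type u} [TopologicalSpace L] (A : Set L) :
    (Quotient.mk (coneSetoid L)) ⁻¹' (coneSet A) =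
      {a : L × {t : ℝ // 0 ≤ t ∧ t < 1} | a.2.1 = 0 ∨ a.1 ∈ A} := by
  ext ⟨x, t⟩
  constructor
  · rintro ⟨x', t', he, ht'⟩
    have hrel := Quotient.exact he
    rcases hrel with h | h
    · cases h
      exact ht'
    · exact Or.inl h.1
  · intro h
    exact ⟨x, t, rfl, h⟩

/-- The conical filtration on the open cone : `(c̊L)_i = c̊(L_{i-1})`. -/
def coneFiltered {L : Type u} [TopologicalSpace L] (FL : FilteredSpace L) :
    FilteredSpace (OpenCone L) where
  dim := FL.dim + 1
  filt i := if i < 0 then ∅ else coneSet (FL.filt (i-1))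
  filt_neg i h := by rw [if_pos h]
  filt_mono := by
    intro i j hij
    dsimp only
    by_cases hi : i < 0
    · rw [if_pos hi]; exact empty_subset _
    · rw [if_neg hi, if_neg (by omega)]
      exact coneSet_mono (FL.filt_mono (by omega))
  filt_closed i := by
    by_cases hi : i < 0
    · rw [if_pos hi]; exact isClosed_empty
    · rw [if_neg hi]
      rw [← isQuotientMap_quotient_mk'.isClosed_preimage]
      show IsClosed ((Quotient.mk (coneSetoid L)) ⁻¹' (coneSet (FL.filt (i-1))))
      rw [preimage_coneSet]
      have he : {a : L × {t : ℝ // 0 ≤ t ∧ t < 1} | a.2.1 = 0 ∨ a.1 ∈ FL.filt (i-1)} =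
          (univ ×ˢ {t : {t : ℝ // 0 ≤ t ∧ t < 1} | t.1 = 0}) ∪ (FL.filt (i-1) ×ˢ univ) := by
        ext ⟨x, t⟩
        simp only [Set.mem_setOf_eq, Set.mem_union, Set.mem_prod, Set.mem_univ, true_and,
          and_true]
      rw [he]
      refine IsClosed.union (isClosed_univ.prod ?_) ((FL.filt_closed _).prod isClosed_univ)
      have he2 : {t : {t : ℝ // 0 ≤ t ∧ t < 1} | t.1 = 0} =
          (Subtype.val : {t : ℝ // 0 ≤ t ∧ t < 1} → ℝ) ⁻¹' {0} := by rfl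
      rw [he2]
      exact isClosed_singleton.preimage continuous_subtype_val
  filt_top i h := by
    have h' : (0 : ℤ) ≤ i := by
      refine le_trans ?_ h
      positivity
    rw [if_neg (by omega)]
    rw [FL.filt_top (i-1) (by push_cast at h ⊢; omega)]
    apply Set.eq_univ_of_forall
    intro z
    obtain ⟨⟨x, t⟩, rfl⟩ := Quotient.exists_rep z
    exact ⟨x, t, rfl, Or.inr trivial⟩
  reg_nonempty := by
    obtain ⟨x, hx1, hx2⟩ := FL.reg_nonempty
    have hd1 : ((FL.dim + 1 : ℕ) : ℤ) - 1 = (FL.dim : ℤ) := by push_cast; ring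
    refine ⟨conePt x ⟨1/2, by norm_num, by norm_num⟩, ?_, ?_⟩
    · rw [if_neg (by push_cast; omega)]
      refine ⟨x, _, rfl, Or.inr ?_⟩
      rw [hd1]
      exact hx1
    · rw [if_neg (by push_cast; omega)]
      rintro ⟨x', t', he, hp⟩
      have hrel := Quotient.exact he
      rcases hrel with hq | hq
      · rcases hp with h0 | hA
        · rw [← congrArg (fun a => (Prod.snd a).1) hq] at h0
          norm_num at h0
        · apply hx2
          have hx' : x' = x := (congrArg Prod.fst hq).symm
          rw [hx'] at hA
          have hd2 : ((FL.dim + 1 : ℕ) : ℤ) - 1 - 1 = (FL.dim : ℤ) - 1 := by push_cast; ring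
          rw [hd2] at hA
          exact hA
      · norm_num at hq

/-- The perversity induced on `L` by a perversity on the cone `c̊L` :
`p̄(S) = p̄(S × ]0,1[)`. -/
def pervConeSlice {L : Type u} [TopologicalSpace L] (p : Set (OpenCone L) → ℤ) :
    Set L → ℤ :=
  fun S => p {z | ∃ x t, z = conePt x t ∧ x ∈ S ∧ t.1 ≠ 0}

/-! ## The intrinsic filtration -/

/-- Two points of a space are equivalent when some pointed neighbourhoods are
homeomorphic. -/
def PtEquiv (X : Type u) [TopologicalSpace X] (x y : X) : Prop :=
  ∃ (U V : Set X) (hU : IsOpen U) (hV : IsOpen V) (hx : x ∈ U) (hy : y ∈ V)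
    (h : U ≃ₜ V), h ⟨x, hx⟩ = ⟨y, hy⟩

lemma PtEquiv.refl (X : Type u) [TopologicalSpace X] (x : X) : PtEquiv X x x :=
  ⟨univ, univ, isOpen_univ, isOpen_univ, trivial, trivial, Homeomorph.refl _, rfl⟩

/-- The filtration of the intrinsic CS-set `X^*`: `X^*_i` is the union of the
equivalence classes contained in `X_i` (equivalently, formed of strata of
dimension at most `i`). -/
def intrinsicFilt {X : Type u} [TopologicalSpace X] (F : FilteredSpace X) (i : ℤ) :
    Set X :=
  {x | ∀ y, PtEquiv X x y → y ∈ F.filt i}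

/-- The intrinsic filtered space `X^*` associated with a filtered space. -/
def intrinsic {X : Type u} [TopologicalSpace X] (F : FilteredSpace X) :
    FilteredSpace X where
  dim := F.dim
  filt := intrinsicFilt F
  filt_neg i h := by
    rw [Set.eq_empty_iff_forall_notMem]
    intro x hx
    have := hx x (PtEquiv.refl X x)
    rw [F.filt_neg i h] at this
    exact this
  filt_mono := fun i j hij x hx y hy => F.filt_mono hij (hx y hy)
  filt_closed i := by
    rw [← isOpen_compl_iff, isOpen_iff_forall_mem_open]
    intro x hx
    rw [Set.mem_compl_iff, intrinsicFilt, Set.mem_setOf_eq, not_forall] at hx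
    obtain ⟨y, hy⟩ := hx
    rw [_root_.not_imp] at hy
    obtain ⟨⟨U, V, hU, hV, hxU, hyV, h, hhx⟩, hyF⟩ := hy
    refine ⟨Subtype.val '' (⇑h ⁻¹' (Subtype.val ⁻¹' (F.filt i)ᶜ)), ?_, ?_, ?_⟩
    · rintro _ ⟨u, hu, rfl⟩
      intro hcon
      exact hu (hcon (h u).1 ⟨U, V, hU, hV, u.2, (h u).2, h, rfl⟩)
    · exact hU.isOpenMap_subtype_val _
        ((h.continuous.isOpen_preimage _) (continuous_subtype_val.isOpen_preimage _
          (F.filt_closed i).isOpen_compl))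
    · refine ⟨⟨x, hxU⟩, ?_, rfl⟩
      show (h ⟨x, hxU⟩ : X) ∉ F.filt i
      rw [hhx]
      exact hyF
  filt_top i h := by
    apply Set.eq_univ_of_forall
    intro x y hy
    rw [F.filt_top i h]
    trivial
  reg_nonempty := by
    obtain ⟨x, hx1, hx2⟩ := F.reg_nonempty
    refine ⟨x, ?_, ?_⟩
    · intro y hy
      rw [F.filt_top _ (le_refl _)]
      trivial
    · intro hcon
      exact hx2 (hcon x (PtEquiv.refl X x))

/-- A stratum `S` of `X` is a source of a stratum `T` of `X^*` when `ν(S) ⊆ T`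
and `dim S = dim T`. -/
def IsSource {X : Type u} [TopologicalSpace X] (F : FilteredSpace X) (S T : Set X) :
    Prop :=
  F.IsStratum S ∧ (intrinsic F).IsStratum T ∧ S ⊆ T ∧
    F.stratumDim S = (intrinsic F).stratumDim T

/-- Equivalence of strata: some point of one is equivalent to some point of the
other. -/
def StrataEquiv (X : Type u) [TopologicalSpace X] (S S' : Set X) : Prop :=
  ∃ x ∈ S, ∃ y ∈ S', PtEquiv X x y

/-- `K`-perversity. -/
def IsKPerversity {X : Type u} [TopologicalSpace X] (F : FilteredSpace X)
    (p : Set X → ℤ) : Prop :=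
  F.IsPerversity p ∧
  (∀ S S' T, IsSource F S T → IsSource F S' T → p S = p S') ∧
  (∀ S R, F.IsStratum S → F.IsRegularStratum R → StrataEquiv X S R → 0 ≤ p S) ∧
  (∀ S S' T, F.IsStratum S → IsSource F S' T → F.IsSingularStratum S' →
    S ⊆ closure S' → StrataEquiv X S S' →
      p S ≤ p S' ∧ F.dualPerv p S' ≤ F.dualPerv p S)

open Classical in
/-- The perversity `ν_* p̄` induced on `X^*` by a perversity on `X` :
its value on a stratum `T` of `X^*` is the value of `p̄` on any source of `T`. -/
def pushPerv {X : Type u} [TopologicalSpace X] (F : FilteredSpace X) (p : Set X → ℤ) :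
    Set X → ℤ :=
  fun T => if h : ∃ S, IsSource F S T then p h.choose else 0

open Classical in
/-- The pullback perversity `f^* q̄` of a perversity along a stratified map:
`(f^* q̄)(S) = q̄(S^f)`. -/
def pullPerv {X : Type u} {Y : Type v} [TopologicalSpace X] [TopologicalSpace Y]
    (F : FilteredSpace X) (F' : FilteredSpace Y) (f : X → Y) (q : Set Y → ℤ) :
    Set X → ℤ :=
  fun S => if h : ∃ T, F'.IsStratum T ∧ f '' S ⊆ T then q h.choose else 0

/-- The intrinsic aggregation `ν : X → X^*` (the identity map), as a pushforward of
filtered chains: blocks are recomputed with respect to the intrinsic filtration. -/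
def nuChain {X : Type u} [TopologicalSpace X] (F : FilteredSpace X) (G : Type w)
    [AddCommGroup G] (m : ℕ) :
    (filtSys X).Chains G m →+ (filtSys X).Chains G m :=
  pushChain (intrinsic F) (ContinuousMap.id X) G m

/-! ## CS sets -/

/-- A CS-set: each `X_i ∖ X_{i-1}` is a topological `i`-manifold (possibly empty)
and points of `X_i ∖ X_{i-1}`, `i ≠ n`, have conical charts `U × c̊L ≅ V` with `L`
a compact (Hausdorff) filtered space of formal dimension `n - i - 1`. -/
def IsCSSet {X : Type u} [TopologicalSpace X] (F : FilteredSpace X) : Prop :=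
  (∀ i : ℕ, ∀ x, ∀ hx : x ∈ F.filt i \ F.filt ((i : ℤ) - 1),
      ∃ V : Set ↥(F.filt i \ F.filt ((i : ℤ) - 1)), IsOpen V ∧ ⟨x, hx⟩ ∈ V ∧
        Nonempty (↥V ≃ₜ (Fin i → ℝ))) ∧
  (∀ i : ℕ, i < F.dim → ∀ x ∈ F.filt i \ F.filt ((i : ℤ) - 1),
    ∃ V : Set X, IsOpen V ∧ x ∈ V ∧
    ∃ U : Set X, x ∈ U ∧ U ⊆ F.filt i \ F.filt ((i : ℤ) - 1) ∧
      IsOpen (Subtype.val ⁻¹' U : Set ↥(F.filt i \ F.filt ((i : ℤ) - 1))) ∧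
    ∃ (L : Type u) (_ : TopologicalSpace L) (_ : T2Space L) (_ : CompactSpace L)
      (FL : FilteredSpace L), (FL.dim : ℤ) = (F.dim : ℤ) - i - 1 ∧
    ∃ φ : (↥U × OpenCone L) ≃ₜ ↥V,
      (∀ u : ↥U, ((φ (u, coneVertexOf FL) : ↥V) : X) = (u : X)) ∧
      (∀ j : ℤ, 0 ≤ j → j ≤ (F.dim : ℤ) - i - 1 →
        Subtype.val '' (⇑φ '' (univ ×ˢ coneSet (FL.filt j))) = V ∩ F.filt (i + j + 1)))

/-- A normal CS-set: one admitting conical charts with connected links. -/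
def IsNormalCSSet {X : Type u} [TopologicalSpace X] (F : FilteredSpace X) : Prop :=
  (∀ i : ℕ, ∀ x, ∀ hx : x ∈ F.filt i \ F.filt ((i : ℤ) - 1),
      ∃ V : Set ↥(F.filt i \ F.filt ((i : ℤ) - 1)), IsOpen V ∧ ⟨x, hx⟩ ∈ V ∧
        Nonempty (↥V ≃ₜ (Fin i → ℝ))) ∧
  (∀ i : ℕ, i < F.dim → ∀ x ∈ F.filt i \ F.filt ((i : ℤ) - 1),
    ∃ V : Set X, IsOpen V ∧ x ∈ V ∧
    ∃ U : Set X, x ∈ U ∧ U ⊆ F.filt i \ F.filt ((i : ℤ) - 1) ∧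
      IsOpen (Subtype.val ⁻¹' U : Set ↥(F.filt i \ F.filt ((i : ℤ) - 1))) ∧
    ∃ (L : Type u) (_ : TopologicalSpace L) (_ : T2Space L) (_ : CompactSpace L)
      (_ : ConnectedSpace L) (FL : FilteredSpace L),
      (FL.dim : ℤ) = (F.dim : ℤ) - i - 1 ∧
    ∃ φ : (↥U × OpenCone L) ≃ₜ ↥V,
      (∀ u : ↥U, ((φ (u, coneVertexOf FL) : ↥V) : X) = (u : X)) ∧
      (∀ j : ℤ, 0 ≤ j → j ≤ (F.dim : ℤ) - i - 1 →
        Subtype.val '' (⇑φ '' (univ ×ˢ coneSet (FL.filt j))) = V ∩ F.filt (i + j + 1)))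

/-! ## Miscellaneous helpers -/

lemma SimpSystem.suppIn_mono (S : SimpSystem.{u}) (G : Type w) [AddCommGroup G] {m : ℕ}
    {P Q : S.Gen m → Prop} (h : ∀ σ, P σ → Q σ) : S.suppIn G P ≤ S.suppIn G Q :=
  fun ξ hξ σ hσ => h σ (hξ σ hσ)

lemma iChains_mono (F : FilteredSpace X) (p : Set X → ℤ) (G : Type w) [AddCommGroup G]
    {W W' : Set X} (h : W ⊆ W') (m : ℕ) :
    iChains F p G W m ≤ iChains F p G W' m := by
  apply inf_le_inf
  · exact (filtSys X).suppIn_mono G (fun σ hσ => ⟨hσ.1, hσ.2.1, hσ.2.2.trans h⟩)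
  · exact AddSubgroup.comap_mono
      ((filtSys X).suppIn_mono G (fun σ hσ => ⟨hσ.1, hσ.2.1, hσ.2.2.trans h⟩))

/-- The inclusion `x ↦ [x, t]` of `L` into the open cone. -/
def coneIncl {L : Type u} [TopologicalSpace L] (t : ℝ) (h0 : 0 ≤ t) (h1 : t < 1) :
    C(L, OpenCone L) where
  toFun x := conePt x ⟨t, h0, h1⟩
  continuous_toFun := by
    apply Continuous.comp
    · exact continuous_quotient_mk'
    · exact continuous_id.prodMk continuous_const

/-- The unit sphere `S^ℓ ⊆ ℝ^{ℓ+1}`. -/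
abbrev Sph (l : ℕ) : Set (EuclideanSpace ℝ (Fin (l+1))) := Metric.sphere 0 1

instance (l : ℕ) : Nonempty (Sph l) :=
  (NormedSpace.sphere_nonempty.mpr zero_le_one).to_subtype

/-- `p̄`-homogeneity: every singular stratum equivalent to a regular stratum has
`p̄(S) ≤ t̄(S)`. -/
def PHomogeneous {X : Type u} [TopologicalSpace X] (F : FilteredSpace X)
    (p : Set X → ℤ) : Prop :=
  ∀ S R, F.IsSingularStratum S → F.IsRegularStratum R → StrataEquiv X S R →
    p S ≤ F.codim S - 2

/-! ## Stratified spaces, more perversities, absolute homology -/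

/-- A stratified space: a filtered space in which the frontier condition holds for
strata: `S ∩ cl S' ≠ ∅` implies `S ⊆ cl S'`. -/
def FilteredSpace.IsStratifiedSpace {X : Type u} [TopologicalSpace X]
    (F : FilteredSpace X) : Prop :=
  ∀ S S', F.IsStratum S → F.IsStratum S' → (S ∩ closure S').Nonempty → S ⊆ closure S'

open Classical in
/-- The maximal (top) perversity `t̄` : `t̄(S) = codim S - 2` on singular strata. -/
def tPerv {X : Type u} [TopologicalSpace X] (F : FilteredSpace X) : Set X → ℤ :=
  fun S => if F.IsRegularStratum S then 0 else F.codim S - 2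

/-- Absolute `p̄`-intersection homology of the region `W` of `X`. -/
abbrev iHa {X : Type u} [TopologicalSpace X] (F : FilteredSpace X) (p : Set X → ℤ)
    (G : Type w) [AddCommGroup G] (W : Set X) (m : ℕ) : Type _ :=
  relHomology ((filtSys X).bdryFrom G) (fun k => iChains F p G W k) (fun _ => ⊥) m

/-- Absolute singular homology of the region `W` of `X`. -/
abbrev sHa (X : Type u) [TopologicalSpace X] (G : Type w) [AddCommGroup G]
    (W : Set X) (m : ℕ) : Type _ :=
  relHomology ((singSys X).bdryFrom G) (fun k => sChains X G W k) (fun _ => ⊥) m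

/-- MacPherson's singular intersection homology `I^{p̄}H_*`. -/
abbrev mH {X : Type u} [TopologicalSpace X] (F : FilteredSpace X) (p : Set X → ℤ)
    (G : Type w) [AddCommGroup G] (m : ℕ) : Type _ :=
  relHomology ((singSys X).bdryFrom G) (fun k => mChains F p G k) (fun _ => ⊥) m

/-! ## Fatal faces and the defect -/

/-- The vertex set of the smallest face `F_S` of `Δ` containing `σ⁻¹(S)`. -/
def vtx {X : Type u} [TopologicalSpace X] {m : ℕ} (σ : PreSimplex X m) (S : Set X) :
    Set (Fin (m+1)) :=
  {j | ∃ t : TSimp m, σ.map t ∈ S ∧ (t : Fin (m+1) → ℝ) j ≠ 0}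

/-- The candidates for the fatal face: proper faces `F_S` with
`dim F_S = dim Δ - codim S + p̄(S)`. -/
def fatalCands {X : Type u} [TopologicalSpace X] (F : FilteredSpace X) (p : Set X → ℤ)
    {m : ℕ} (σ : PreSimplex X m) : Set (Set (Fin (m+1))) :=
  {A | ∃ S, F.IsStratum S ∧ A = vtx σ S ∧ A ≠ univ ∧
    ((A.ncard : ℤ) = (m : ℤ) - F.codim S + p S + 1)}

/-- `A` is (the vertex set of) the `p̄`-fatal face of `σ`: the least candidate. -/
def IsFatalIdx {X : Type u} [TopologicalSpace X] (F : FilteredSpace X) (p : Set X → ℤ)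
    {m : ℕ} (σ : PreSimplex X m) (A : Set (Fin (m+1))) : Prop :=
  A ∈ fatalCands F p σ ∧ ∀ B ∈ fatalCands F p σ, A ⊆ B

/-- `S` is the `p̄`-guilty stratum of `σ` : `F_S` is the fatal face of `σ`. -/
def IsGuilty {X : Type u} [TopologicalSpace X] (F : FilteredSpace X) (p : Set X → ℤ)
    {m : ℕ} (σ : PreSimplex X m) (S : Set X) : Prop :=
  F.IsStratum S ∧ IsFatalIdx F p σ (vtx σ S) ∧
    (((vtx σ S).ncard : ℤ) = (m : ℤ) - F.codim S + p S + 1)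

/-- The `p̄`-defect `ℓ_{p̄}(σ)` : the codimension of the guilty stratum, `0` if `σ` is
of `p̄`-intersection. -/
def defect {X : Type u} [TopologicalSpace X] (F : FilteredSpace X) (p : Set X → ℤ)
    {m : ℕ} (σ : PreSimplex X m) : ℤ :=
  sSup ({0} ∪ {c | ∃ S, IsGuilty F p σ S ∧ c = F.codim S})

/-- The linear simplex with vertices `v j` (a linear self-map of the standard
simplex). -/
def linMap {m : ℕ} (v : Fin (m+1) → TSimp m) : C(TSimp m, TSimp m) where
  toFun t := ⟨fun i => ∑ j, (t : Fin (m+1) → ℝ) j * (v j : Fin (m+1) → ℝ) i, by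
    refine ⟨fun i => ?_, ?_⟩
    · exact Finset.sum_nonneg fun j _ => mul_nonneg (t.2.1 j) ((v j).2.1 i)
    · rw [Finset.sum_comm]
      have he : ∀ j : Fin (m+1),
          (∑ i, (t : Fin (m+1) → ℝ) j * (v j : Fin (m+1) → ℝ) i) = (t : Fin (m+1) → ℝ) j := by
        intro j
        rw [← Finset.mul_sum]
        convert mul_one _ using 2
        exact (v j).2.2
      rw [Finset.sum_congr rfl (fun j _ => he j)]
      exact t.2.2⟩
  continuous_toFun := by
    apply Continuous.subtype_mk
    apply continuous_pi
    intro i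
    apply continuous_finset_sum
    intro j _
    exact ((continuous_apply j).comp continuous_subtype_val).mul continuous_const

namespace Fin

lemma val_succAbove_eq_ite {n : ℕ} (p : Fin (n + 1)) (i : Fin n) :
    (p.succAbove i : ℕ) = if (i : ℕ) < p then (i : ℕ) else (i : ℕ) + 1 := by
  rcases lt_or_ge (i : ℕ) p with h | h
  · rw [succAbove_of_castSucc_lt _ _ h, if_pos h, val_castSucc]
  · rw [succAbove_of_le_castSucc _ _ h, if_neg (by omega), val_succ]

lemma val_predAbove_eq_ite {n : ℕ} (p : Fin n) (i : Fin (n + 1)) :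
    (p.predAbove i : ℕ) = if (i : ℕ) ≤ p then (i : ℕ) else (i : ℕ) - 1 := by
  rcases le_or_gt (i : ℕ) p with h | h
  · rw [predAbove_of_le_castSucc _ _ h, if_pos h, coe_castPred]
  · rw [predAbove_of_castSucc_lt _ _ h, if_neg (by omega), val_pred]

end Fin

namespace stdSimplex

variable {ι κ : Type*} [Fintype ι] [Fintype κ] [DecidableEq κ]

lemma map_apply_ne_zero_iff (f : ι → κ) (s : stdSimplex ℝ ι) (k : κ) :
    map f s k ≠ 0 ↔ ∃ i, f i = k ∧ s i ≠ 0 := by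
  rw [map_coe, FunOnFinite.linearMap_apply_apply, Ne,
    Finset.sum_eq_zero_iff_of_nonneg fun i _ => zero_le s i]
  simp

lemma sum_mul_map (f : ι → κ) (s : stdSimplex ℝ ι) (w : κ → ℝ) :
    ∑ k, w k * map f s k = ∑ i, w (f i) * s i := by
  simp only [map_coe, FunOnFinite.linearMap_apply_apply, Finset.mul_sum]
  rw [← Finset.sum_fiberwise Finset.univ f fun i => w (f i) * s i]
  refine Finset.sum_congr rfl fun k _ => Finset.sum_congr rfl fun i hi => ?_
  rw [(Finset.mem_filter.1 hi).2]

end stdSimplex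

def simplexMap {k n : ℕ} (c : Fin (k + 1) → Fin (n + 1)) : C(TSimp k, TSimp n) :=
  ⟨stdSimplex.map c, stdSimplex.continuous_map c⟩

lemma simplexMap_comp {k l n : ℕ} (c : Fin (k + 1) → Fin (l + 1)) (c' : Fin (l + 1) → Fin (n + 1)) :
    (simplexMap c').comp (simplexMap c) = simplexMap (c' ∘ c) :=
  ContinuousMap.ext fun u => stdSimplex.map_comp_apply c c' u

lemma simplexMap_id {n : ℕ} : simplexMap (id : Fin (n + 1) → Fin (n + 1)) = ContinuousMap.id _ :=
  ContinuousMap.ext fun u => stdSimplex.map_id_apply u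

lemma faceMap_eq_simplexMap (m : ℕ) (j : Fin (m + 2)) : faceMap m j = simplexMap j.succAbove := by
  refine ContinuousMap.ext fun u => Subtype.ext (funext fun k => ?_)
  change Fin.insertNth (α := fun _ => ℝ) j 0 (u : Fin (m + 1) → ℝ) k =
    stdSimplex.map j.succAbove u k
  rw [stdSimplex.map_coe, FunOnFinite.linearMap_apply_apply]
  induction k using Fin.succAboveCases j with
  | x => simp [Fin.succAbove_ne]
  | p l => simp [Finset.filter_eq']

lemma vert_eq_vertex (m : ℕ) (j : Fin (m + 1)) : vert m j = stdSimplex.vertex j := by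
  ext i
  simp only [vert, stdSimplex.vertex_coe, Pi.single_apply]
  rfl

lemma faceMap_vert (m : ℕ) (j : Fin (m + 2)) (k : Fin (m + 1)) :
    faceMap m j (vert m k) = vert (m + 1) (j.succAbove k) := by
  rw [faceMap_eq_simplexMap, vert_eq_vertex, vert_eq_vertex]
  exact stdSimplex.map_vertex _ _

lemma suppCard_eq_card {m : ℕ} (t : TSimp m) :
    suppCard t = (Finset.univ.filter fun j => (t : Fin (m + 1) → ℝ) j ≠ 0).card := by
  unfold suppCard
  congr 1
  exact Finset.filter_congr_decidable _ _ _

lemma suppCard_le_suppCard_simplexMap_predAbove (n : ℕ) (i : Fin (n + 1)) (u : TSimp (n + 1)) :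
    suppCard u ≤ suppCard (simplexMap i.predAbove u) + 1 := by
  classical
  set s := Finset.univ.filter fun j => (u : Fin (n + 2) → ℝ) j ≠ 0
  have hsupp : (Finset.univ.filter fun j => (simplexMap i.predAbove u : Fin (n + 1) → ℝ) j ≠ 0)
      = s.image i.predAbove := by
    ext k
    simp only [Finset.mem_filter, Finset.mem_univ, true_and, Finset.mem_image, s]
    exact (stdSimplex.map_apply_ne_zero_iff _ u k).trans (by simp only [and_comm])
  have hinj : Set.InjOn i.predAbove (s.erase i.succ) := by
    intro a ha b hb hab
    have ha' := Finset.ne_of_mem_erase ha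
    have hb' := Finset.ne_of_mem_erase hb
    rw [Ne, Fin.ext_iff, Fin.val_succ] at ha' hb'
    have := congrArg Fin.val hab
    rw [Fin.val_predAbove_eq_ite, Fin.val_predAbove_eq_ite] at this
    ext
    split_ifs at this <;> omega
  rw [suppCard_eq_card, suppCard_eq_card, hsupp]
  calc s.card ≤ (s.erase i.succ).card + 1 := by
        have := Finset.pred_card_le_card_erase (s := s) (a := i.succ)
        omega
    _ = ((s.erase i.succ).image i.predAbove).card + 1 := by rw [Finset.card_image_of_injOn hinj]
    _ ≤ (s.image i.predAbove).card + 1 := by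
      gcongr
      exact Finset.erase_subset _ _

section ChainMap

variable {C : ℕ → Type*} [∀ m, AddCommGroup (C m)] {D : ℕ → Type*} [∀ m, AddCommGroup (D m)]
  {d : ∀ m, C m →+ C (m - 1)} {d' : ∀ m, D m →+ D (m - 1)}
  {A : ∀ m, AddSubgroup (C m)} {A' : ∀ m, AddSubgroup (D m)} {m : ℕ}

lemma mem_relCycles_bot {ξ : C m} :
    ξ ∈ relCycles d A (fun _ => ⊥) m ↔ ξ ∈ A m ∧ d m ξ = 0 := by
  rw [relCycles, AddSubgroup.mem_inf, AddSubgroup.mem_comap, AddSubgroup.mem_bot]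

lemma relBnds_bot : relBnds d A (fun _ => ⊥) m = (A (m + 1)).map (d (m + 1)) := sup_bot_eq _

lemma hcl_eq_hcl {ξ ξ' : C m} (h : ξ ∈ relCycles d A (fun _ => ⊥) m)
    (h' : ξ' ∈ relCycles d A (fun _ => ⊥) m) (hb : ξ' - ξ ∈ (A (m + 1)).map (d (m + 1))) :
    hcl d A (fun _ => ⊥) ξ h = hcl d A (fun _ => ⊥) ξ' h' := by
  rw [hcl, hcl, QuotientAddGroup.eq, AddSubgroup.mem_addSubgroupOf, relBnds_bot]
  refine ⟨?_, (relCycles d A _ m).add_mem ((relCycles d A _ m).neg_mem h) h'⟩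
  simpa [neg_add_eq_sub] using hb

variable (d d' A A') in
def IsChainMap (f : ∀ m, C m →+ D m) : Prop :=
  (∀ m ξ, f (m - 1) (d m ξ) = d' m (f m ξ)) ∧ ∀ m, A m ≤ (A' m).comap (f m)

namespace IsChainMap

variable {f : ∀ m, C m →+ D m}

lemma map_mem_relCycles (hf : IsChainMap d d' A A' f) {ξ : C m}
    (h : ξ ∈ relCycles d A (fun _ => ⊥) m) :
    f m ξ ∈ relCycles d' A' (fun _ => ⊥) m := by
  rw [mem_relCycles_bot] at h ⊢
  exact ⟨hf.2 m h.1, by rw [← hf.1, h.2, map_zero]⟩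

lemma map_mem_boundaries (hf : IsChainMap d d' A A' f) {ξ : C m}
    (h : ξ ∈ (A (m + 1)).map (d (m + 1))) :
    f m ξ ∈ (A' (m + 1)).map (d' (m + 1)) := by
  obtain ⟨ζ, hζ, rfl⟩ := h
  exact ⟨f (m + 1) ζ, hf.2 _ hζ, (hf.1 (m + 1) ζ).symm⟩

def homologyMap (hf : IsChainMap d d' A A' f) (m : ℕ) :
    relHomology d A (fun _ => ⊥) m →+ relHomology d' A' (fun _ => ⊥) m :=
  QuotientAddGroup.map _ _
    (((f m).comp (relCycles d A _ m).subtype).codRestrict _ fun x => hf.map_mem_relCycles x.2)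
    (fun x hx => by
      rw [AddSubgroup.mem_addSubgroupOf, relBnds_bot] at hx
      rw [AddSubgroup.mem_comap, AddSubgroup.mem_addSubgroupOf, relBnds_bot]
      exact ⟨hf.map_mem_boundaries hx.1, hf.map_mem_relCycles x.2⟩)

lemma homologyMap_hcl (hf : IsChainMap d d' A A' f) {ξ : C m}
    (h : ξ ∈ relCycles d A (fun _ => ⊥) m) :
    hf.homologyMap m (hcl d A _ ξ h) = hcl d' A' _ (f m ξ) (hf.map_mem_relCycles h) := rfl

theorem inducesIso (hf : IsChainMap d d' A A' f) {g : ∀ m, D m →+ C m} (hg : IsChainMap d' d A' A g)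
    (hgf : ∀ ξ ∈ relCycles d A (fun _ => ⊥) m, g m (f m ξ) - ξ ∈ (A (m + 1)).map (d (m + 1)))
    (hfg : ∀ η ∈ relCycles d' A' (fun _ => ⊥) m,
      f m (g m η) - η ∈ (A' (m + 1)).map (d' (m + 1))) :
    InducesIso d A (fun _ => ⊥) d' A' (fun _ => ⊥) m (f m) := by
  refine ⟨(hf.homologyMap m).toAddEquiv (hg.homologyMap m) ?_ ?_,
    fun ξ h _ => hf.homologyMap_hcl h⟩
  · refine QuotientAddGroup.addMonoidHom_ext _ (AddMonoidHom.ext fun ⟨ξ, h⟩ => ?_)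
    exact (hcl_eq_hcl _ _ (hgf ξ h)).symm
  · refine QuotientAddGroup.addMonoidHom_ext _ (AddMonoidHom.ext fun ⟨η, h⟩ => ?_)
    exact (hcl_eq_hcl _ _ (hfg η h)).symm

end IsChainMap

end ChainMap

namespace SimpSystem

variable {G : Type w} [AddCommGroup G]

lemma bdry_single (S : SimpSystem.{u}) {m : ℕ} (σ : S.Gen (m + 1)) (g : G) :
    S.bdry G m (Finsupp.single σ g) =
      ∑ j : Fin (m + 2), (-1 : ℤ) ^ (j : ℕ) • Finsupp.single (S.face m j σ) g := by
  simp [bdry]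

lemma single_mem_suppIn (S : SimpSystem.{u}) {m : ℕ} {P : S.Gen m → Prop} {σ : S.Gen m}
    (h : P σ) (g : G) : Finsupp.single σ g ∈ S.suppIn G P := fun τ hτ => by
  rwa [Finset.mem_singleton.1 (Finsupp.support_single_subset hτ)]

lemma mapDomain_mem_suppIn {S : SimpSystem.{u}} {T : SimpSystem.{v}} {m n : ℕ}
    {P : S.Gen m → Prop} {Q : T.Gen n → Prop} {f : S.Gen m → T.Gen n} (hf : ∀ σ, P σ → Q (f σ))
    {ξ : S.Chains G m} (hξ : ξ ∈ S.suppIn G P) : Finsupp.mapDomain f ξ ∈ T.suppIn G Q := by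
  classical
  intro τ hτ
  obtain ⟨σ, hσ, rfl⟩ := Finset.mem_image.1 (Finsupp.mapDomain_support hτ)
  exact hf σ (hξ σ hσ)

end SimpSystem

lemma PreSimplex.ext {m : ℕ} {σ σ' : PreSimplex X m} (hmap : σ.map = σ'.map)
    (hblock : σ.block = σ'.block) : σ = σ' := by
  cases σ; cases σ'; cases hmap; cases hblock; rfl

section Pushforward

variable {G : Type w} [AddCommGroup G]

lemma canonicalBlock_comp_faceMap (F' : FilteredSpace Y) {m : ℕ} (τ : C(TSimp (m + 1), Y))
    (j : Fin (m + 2)) :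
    canonicalBlock F' (τ.comp (faceMap m j)) = canonicalBlock F' τ ∘ j.succAbove := by
  funext k
  simp only [canonicalBlock, ContinuousMap.comp_apply, Function.comp_apply, faceMap_vert]

lemma pushSimp_face (F' : FilteredSpace Y) (g : C(X, Y)) {m : ℕ} (σ : PreSimplex X (m + 1))
    (j : Fin (m + 2)) : pushSimp F' g (σ.face j) = (pushSimp F' g σ).face j :=
  PreSimplex.ext rfl (canonicalBlock_comp_faceMap F' (g.comp σ.map) j)

lemma pushChain_single (F' : FilteredSpace Y) (g : C(X, Y)) {m : ℕ} (σ : PreSimplex X m)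
    (a : G) : pushChain F' g G m (Finsupp.single σ a) = Finsupp.single (pushSimp F' g σ) a :=
  Finsupp.mapDomain_single

lemma pushChain_bdryFrom (F' : FilteredSpace Y) (g : C(X, Y)) (m : ℕ)
    (ξ : (filtSys X).Chains G m) :
    pushChain F' g G (m - 1) ((filtSys X).bdryFrom G m ξ) =
      (filtSys Y).bdryFrom G m (pushChain F' g G m ξ) := by
  cases m with
  | zero => exact map_zero _
  | succ m =>
    show ((pushChain F' g G m).comp ((filtSys X).bdry G m)) ξ =
      (((filtSys Y).bdry G m).comp (pushChain F' g G (m + 1))) ξ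
    congr 1
    refine Finsupp.addHom_ext fun σ a => ?_
    rw [AddMonoidHom.comp_apply, AddMonoidHom.comp_apply, SimpSystem.bdry_single, map_sum,
      pushChain_single, SimpSystem.bdry_single]
    refine Finset.sum_congr rfl fun j _ => ?_
    rw [map_zsmul, pushChain_single]
    exact congrArg (fun τ => (-1 : ℤ) ^ (j : ℕ) • Finsupp.single τ a) (pushSimp_face F' g σ j)

lemma isChainMap_pushChain {F : FilteredSpace X} {F' : FilteredSpace Y} {p : Set X → ℤ}
    {p' : Set Y → ℤ} {W : Set X} {W' : Set Y} {g : C(X, Y)}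
    (h : ∀ m (σ : PreSimplex X m), Allowable F p W σ → Allowable F' p' W' (pushSimp F' g σ)) :
    IsChainMap ((filtSys X).bdryFrom G) ((filtSys Y).bdryFrom G) (iChains F p G W)
      (iChains F' p' G W') (pushChain F' g G) := by
  refine ⟨pushChain_bdryFrom F' g, fun m ξ hξ => ⟨?_, ?_⟩⟩
  · exact SimpSystem.mapDomain_mem_suppIn (h m) hξ.1
  · change (filtSys Y).bdryFrom G m (pushChain F' g G m ξ) ∈
      (filtSys Y).suppIn G fun σ => Allowable F' p' W' σ
    rw [← pushChain_bdryFrom]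
    exact SimpSystem.mapDomain_mem_suppIn (h (m - 1)) hξ.2

end Pushforward

namespace PreSimplex

def postcomp (g : C(X, Y)) {m : ℕ} (σ : PreSimplex X m) : PreSimplex Y m :=
  ⟨g.comp σ.map, σ.block⟩

def precomp {k n : ℕ} (σ : PreSimplex X n) (c : Fin (k + 1) → Fin (n + 1)) : PreSimplex X k :=
  ⟨σ.map.comp (simplexMap c), σ.block ∘ c⟩

lemma face_eq_precomp {m : ℕ} (σ : PreSimplex X (m + 1)) (j : Fin (m + 2)) :
    σ.face j = σ.precomp j.succAbove := by
  rw [face, precomp, faceMap_eq_simplexMap]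

lemma precomp_precomp {k l n : ℕ} (σ : PreSimplex X n) (c : Fin (l + 1) → Fin (n + 1))
    (c' : Fin (k + 1) → Fin (l + 1)) : (σ.precomp c).precomp c' = σ.precomp (c ∘ c') := by
  simp only [precomp, ContinuousMap.comp_assoc, simplexMap_comp]
  rfl

lemma precomp_id {k : ℕ} (σ : PreSimplex X k) : σ.precomp id = σ := by
  rw [precomp, simplexMap_id]
  rfl

lemma precomp_eq_self {k : ℕ} (σ : PreSimplex X k) {c : Fin (k + 1) → Fin (k + 1)}
    (hc : ∀ l, c l = l) : σ.precomp c = σ := by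
  obtain rfl : c = id := funext hc
  exact precomp_id σ

lemma IsFiltered.precomp {F : FilteredSpace X} {k n : ℕ} {σ : PreSimplex X n}
    (h : σ.IsFiltered F) {c : Fin (k + 1) → Fin (n + 1)} (hc : Monotone c) :
    (σ.precomp c).IsFiltered F := by
  refine ⟨h.1.comp hc, fun i => Set.ext fun u => ?_⟩
  have hσ := Set.ext_iff.1 (h.2 i) (simplexMap c u)
  simp only [Set.mem_preimage, Set.mem_ofPred_eq] at hσ ⊢
  rw [PreSimplex.precomp, ContinuousMap.comp_apply, hσ]
  change (∀ j, stdSimplex.map c u j ≠ 0 → _) ↔ _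
  simp only [stdSimplex.map_apply_ne_zero_iff]
  exact ⟨fun H l hl => H _ ⟨l, rfl, hl⟩, fun H _ ⟨l, hl, hu⟩ => hl ▸ H l hu⟩

lemma IsFiltered.postcomp {F : FilteredSpace X} {F' : FilteredSpace Y} {g : C(X, Y)}
    (hg : ∀ i, g ⁻¹' F'.filt i = F.filt i) {m : ℕ} {σ : PreSimplex X m}
    (h : σ.IsFiltered F) : (σ.postcomp g).IsFiltered F' :=
  ⟨h.1, fun i => by rw [PreSimplex.postcomp, ContinuousMap.coe_comp, Set.preimage_comp, hg,
    h.2 i]⟩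

lemma IsFiltered.canonicalBlock_eq {F : FilteredSpace X} {m : ℕ} {σ : PreSimplex X m}
    (h : σ.IsFiltered F) : canonicalBlock F σ.map = σ.block := by
  funext j
  have hvert : ∀ l, ((vert m j : TSimp m) : Fin (m + 1) → ℝ) l ≠ 0 ↔ l = j := fun l => by
    rw [vert_eq_vertex]
    by_cases hl : l = j <;> simp [hl]
  have hset : {i : ℤ | σ.map (vert m j) ∈ F.filt i} = Set.Ici (σ.block j) := by
    ext i
    rw [Set.mem_ofPred_eq, ← Set.mem_preimage, h.2 i, Set.mem_ofPred_eq, Set.mem_Ici]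
    simp only [hvert, forall_eq]
  rw [canonicalBlock, hset, csInf_Ici]

lemma pushSimp_eq_postcomp {F : FilteredSpace X} {F' : FilteredSpace Y} {g : C(X, Y)}
    (hg : ∀ i, g ⁻¹' F'.filt i = F.filt i) {m : ℕ} {σ : PreSimplex X m}
    (h : σ.IsFiltered F) : pushSimp F' g σ = σ.postcomp g :=
  PreSimplex.ext rfl (h.postcomp hg).canonicalBlock_eq

end PreSimplex

lemma pushChain_pushChain {Z : Type u} [TopologicalSpace Z] (F' : FilteredSpace Y)
    (F'' : FilteredSpace Z) (g : C(X, Y)) (g' : C(Y, Z)) (G : Type w) [AddCommGroup G] (m : ℕ)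
    (ξ : (filtSys X).Chains G m) :
    pushChain F'' g' G m (pushChain F' g G m ξ) = pushChain F'' (g'.comp g) G m ξ :=
  Finsupp.mapDomain_comp.symm

lemma pushChain_eq_mapDomain_postcomp {F : FilteredSpace X} {F' : FilteredSpace Y}
    {g : C(X, Y)} (hg : ∀ i, g ⁻¹' F'.filt i = F.filt i) {G : Type w} [AddCommGroup G] {m : ℕ}
    {ξ : (filtSys X).Chains G m} (hξ : ξ ∈ (filtSys X).suppIn G (PreSimplex.IsFiltered F)) :
    pushChain F' g G m ξ = Finsupp.mapDomain (PreSimplex.postcomp g) ξ :=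
  Finsupp.mapDomain_congr fun σ hσ => PreSimplex.pushSimp_eq_postcomp hg (hξ σ hσ)

lemma MapAdmissible.comp_simplexMap {F : FilteredSpace X} {p : Set X → ℤ} {k n : ℕ}
    {τ : C(TSimp n, X)} (h : MapAdmissible F p τ) {c : Fin (k + 1) → Fin (n + 1)}
    (hc : ∀ u, (suppCard u : ℤ) ≤ suppCard (simplexMap c u) + (k - n)) :
    MapAdmissible F p (τ.comp (simplexMap c)) := fun S hS u hu => by
  have := h S hS _ hu
  linarith [hc u]

lemma Allowable.precomp {F : FilteredSpace X} {p : Set X → ℤ} {W : Set X} {k n : ℕ}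
    {σ : PreSimplex X n} (h : Allowable F p W σ) {c : Fin (k + 1) → Fin (n + 1)}
    (hc : Monotone c) (hcard : ∀ u, (suppCard u : ℤ) ≤ suppCard (simplexMap c u) + (k - n)) :
    Allowable F p W (σ.precomp c) :=
  ⟨h.1.precomp hc, h.2.1.comp_simplexMap hcard,
    (range_comp_subset_range (simplexMap c) σ.map).trans h.2.2⟩

namespace FilteredSpace

variable {F : FilteredSpace X}

lemma IsStratumDim.unique {S : Set X} {i i' : ℤ} (h : F.IsStratumDim S i)
    (h' : F.IsStratumDim S i') : i = i' := by
  obtain ⟨x, hx, rfl⟩ := h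
  obtain ⟨y, hy, hS⟩ := h'
  have hx' : x ∈ F.filt i' \ F.filt (i' - 1) :=
    connectedComponentIn_subset _ _ (hS ▸ mem_connectedComponentIn hx)
  by_contra hne
  rcases lt_or_gt_of_ne hne with hlt | hlt
  · exact hx'.2 (F.filt_mono (by omega : i ≤ i' - 1) hx.1)
  · exact hx.2 (F.filt_mono (by omega : i' ≤ i - 1) hx'.1)

lemma IsStratumDim.stratumDim_eq {S : Set X} {i : ℤ} (h : F.IsStratumDim S i) :
    F.stratumDim S = i := by
  have hex : ∃ i, F.IsStratumDim S i := ⟨i, h⟩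
  rw [stratumDim, dif_pos hex]
  exact hex.choose_spec.unique h

end FilteredSpace

section ProdLeft

variable {M : Type v} [TopologicalSpace M]

lemma connectedComponentIn_univ_prod [PreconnectedSpace M] {D : Set X} {x : X} (hx : x ∈ D)
    (r : M) :
    connectedComponentIn (univ ×ˢ D) (r, x) = univ ×ˢ connectedComponentIn D x := by
  apply Subset.antisymm
  · intro y hy
    have hsnd : Prod.snd '' connectedComponentIn (univ ×ˢ D) (r, x) ⊆ connectedComponentIn D x :=
      (isPreconnected_connectedComponentIn.image _ continuous_snd.continuousOn)
        |>.subset_connectedComponentIn ⟨(r, x), mem_connectedComponentIn ⟨trivial, hx⟩, rfl⟩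
          (by rintro _ ⟨w, hw, rfl⟩; exact (connectedComponentIn_subset _ _ hw).2)
    exact ⟨trivial, hsnd ⟨y, hy, rfl⟩⟩
  · exact (isPreconnected_univ.prod isPreconnected_connectedComponentIn).subset_connectedComponentIn
      ⟨trivial, mem_connectedComponentIn hx⟩
      (prod_mono subset_rfl (connectedComponentIn_subset _ _))

variable [Nonempty M] (F : FilteredSpace X)

lemma FilteredSpace.prodLeft_filt_diff (i : ℤ) :
    (F.prodLeft M).filt i \ (F.prodLeft M).filt (i - 1) = univ ×ˢ (F.filt i \ F.filt (i - 1)) := by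
  ext ⟨r, x⟩
  simp [FilteredSpace.prodLeft]

lemma isFiltered_prodLeft_iff {m : ℕ} (σ : PreSimplex (M × X) m) :
    σ.IsFiltered (F.prodLeft M) ↔ (σ.postcomp ContinuousMap.snd).IsFiltered F := by
  simp only [PreSimplex.IsFiltered, PreSimplex.postcomp, ContinuousMap.coe_comp,
    Set.preimage_comp, FilteredSpace.prodLeft, univ_prod]
  rfl

variable [PreconnectedSpace M]

lemma FilteredSpace.isStratumDim_prodLeft_iff (T : Set (M × X)) (i : ℤ) :
    (F.prodLeft M).IsStratumDim T i ↔ ∃ S, F.IsStratumDim S i ∧ T = univ ×ˢ S := by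
  simp only [IsStratumDim, prodLeft_filt_diff]
  constructor
  · rintro ⟨⟨r, x⟩, ⟨-, hx⟩, rfl⟩
    exact ⟨_, ⟨x, hx, rfl⟩, connectedComponentIn_univ_prod hx r⟩
  · rintro ⟨S, ⟨x, hx, rfl⟩, rfl⟩
    obtain ⟨r⟩ := ‹Nonempty M›
    exact ⟨(r, x), ⟨trivial, hx⟩, (connectedComponentIn_univ_prod hx r).symm⟩

lemma FilteredSpace.isStratum_prodLeft_iff (T : Set (M × X)) :
    (F.prodLeft M).IsStratum T ↔ ∃ S, F.IsStratum S ∧ T = univ ×ˢ S := by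
  simp only [IsStratum, isStratumDim_prodLeft_iff]
  exact ⟨fun ⟨i, S, hS, hT⟩ => ⟨S, ⟨i, hS⟩, hT⟩, fun ⟨S, ⟨i, hS⟩, hT⟩ => ⟨i, S, hS, hT⟩⟩

lemma FilteredSpace.codim_prodLeft {S : Set X} (hS : F.IsStratum S) :
    (F.prodLeft M).codim (univ ×ˢ S) = F.codim S := by
  obtain ⟨i, hS⟩ := hS
  rw [codim, codim, hS.stratumDim_eq,
    ((isStratumDim_prodLeft_iff F _ i).2 ⟨S, hS, rfl⟩).stratumDim_eq]
  rfl

lemma mapAdmissible_prodLeft_iff (p : Set X → ℤ) {m : ℕ} (τ : C(TSimp m, M × X)) :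
    MapAdmissible (F.prodLeft M) (pervProdLeft p) τ ↔
      MapAdmissible F p (ContinuousMap.snd.comp τ) := by
  have hperv : ∀ S, pervProdLeft (M' := M) p (univ ×ˢ S) = p S := fun S => by
    rw [pervProdLeft, snd_image_prod univ_nonempty]
  constructor
  · intro h S hS t ht
    have := h _ ((F.isStratum_prodLeft_iff _).2 ⟨S, hS, rfl⟩) t ⟨trivial, ht⟩
    rwa [F.codim_prodLeft hS, hperv] at this
  · intro h T hT t ht
    obtain ⟨S, hS, rfl⟩ := (F.isStratum_prodLeft_iff T).1 hT
    rw [F.codim_prodLeft hS, hperv]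
    exact h S hS t ht.2

lemma allowable_prodLeft_iff (p : Set X → ℤ) {m : ℕ} (σ : PreSimplex (M × X) m) :
    Allowable (F.prodLeft M) (pervProdLeft p) univ σ ↔
      Allowable F p univ (σ.postcomp ContinuousMap.snd) := by
  simp only [Allowable, subset_univ, and_true, isFiltered_prodLeft_iff,
    PreSimplex.Admissible, mapAdmissible_prodLeft_iff]
  rfl

end ProdLeft

section Slice

variable {M : Type v} [TopologicalSpace M]

def sliceIncl (z : M) : C(X, M × X) := (ContinuousMap.const X z).prodMk (ContinuousMap.id X)

def sliceRetraction (z : M) : C(M × X, M × X) := (sliceIncl z).comp ContinuousMap.snd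

variable [Nonempty M] (F : FilteredSpace X)

lemma preimage_snd_filt (i : ℤ) :
    (ContinuousMap.snd : C(M × X, X)) ⁻¹' F.filt i = (F.prodLeft M).filt i :=
  univ_prod.symm

lemma preimage_sliceIncl_filt (z : M) (i : ℤ) :
    sliceIncl z ⁻¹' (F.prodLeft M).filt i = F.filt i := by
  ext x
  simp [sliceIncl, FilteredSpace.prodLeft]

variable [PreconnectedSpace M] (p : Set X → ℤ)

lemma allowable_pushSimp_snd {m : ℕ} {σ : PreSimplex (M × X) m}
    (h : Allowable (F.prodLeft M) (pervProdLeft p) univ σ) :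
    Allowable F p univ (pushSimp F ContinuousMap.snd σ) := by
  rw [PreSimplex.pushSimp_eq_postcomp (preimage_snd_filt F) h.1]
  exact (allowable_prodLeft_iff F p σ).1 h

lemma allowable_pushSimp_sliceIncl (z : M) {m : ℕ} {σ : PreSimplex X m}
    (h : Allowable F p univ σ) :
    Allowable (F.prodLeft M) (pervProdLeft p) univ (pushSimp (F.prodLeft M) (sliceIncl z) σ) := by
  rw [PreSimplex.pushSimp_eq_postcomp (preimage_sliceIncl_filt F z) h.1,
    allowable_prodLeft_iff]
  exact h

lemma allowable_postcomp_sliceRetraction (z : M) {m : ℕ} {τ : PreSimplex (M × X) m}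
    (h : Allowable (F.prodLeft M) (pervProdLeft p) univ τ) :
    Allowable (F.prodLeft M) (pervProdLeft p) univ (τ.postcomp (sliceRetraction z)) := by
  rw [allowable_prodLeft_iff] at h ⊢
  exact h

end Slice

def prismWeight {n : ℕ} (i : Fin (n + 1)) (l : Fin (n + 2)) : ℝ :=
  if (i : ℕ) < l then 1 else 0

namespace PreSimplex

def pullToward (z : ℝ) {k : ℕ} (w : Fin (k + 1) → ℝ) (σ : PreSimplex (ℝ × X) k) :
    PreSimplex (ℝ × X) k where
  map :=
    { toFun := fun u =>
        ((1 - ∑ l, w l * (u : Fin (k + 1) → ℝ) l) * (σ.map u).1 +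
          (∑ l, w l * (u : Fin (k + 1) → ℝ) l) * z, (σ.map u).2)
      continuous_toFun := by
        have hs : Continuous fun u : TSimp k => ∑ l, w l * (u : Fin (k + 1) → ℝ) l :=
          continuous_finsetSum _ fun l _ =>
            continuous_const.mul ((continuous_apply l).comp continuous_subtype_val)
        exact (((continuous_const.sub hs).mul σ.map.continuous.fst).add
          (hs.mul continuous_const)).prodMk σ.map.continuous.snd }
  block := σ.block

variable (z : ℝ)

lemma face_pullToward {k : ℕ} (w : Fin (k + 2) → ℝ) (σ : PreSimplex (ℝ × X) (k + 1))
    (j : Fin (k + 2)) : (σ.pullToward z w).face j = (σ.face j).pullToward z (w ∘ j.succAbove) := by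
  refine PreSimplex.ext (ContinuousMap.ext fun u => ?_) rfl
  have hw : ∑ l, w l * (faceMap k j u : Fin (k + 2) → ℝ) l = ∑ l, w (j.succAbove l) * u l := by
    rw [faceMap_eq_simplexMap]
    exact stdSimplex.sum_mul_map _ _ _
  simp only [face, pullToward, ContinuousMap.comp_apply, ContinuousMap.coe_mk, hw]
  rfl

lemma pullToward_zero {k : ℕ} (σ : PreSimplex (ℝ × X) k) : σ.pullToward z 0 = σ := by
  refine PreSimplex.ext (ContinuousMap.ext fun u => ?_) rfl
  simp [pullToward]

lemma pullToward_one {k : ℕ} (σ : PreSimplex (ℝ × X) k) :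
    σ.pullToward z 1 = σ.postcomp (sliceRetraction z) := by
  refine PreSimplex.ext (ContinuousMap.ext fun u => ?_) rfl
  simp [pullToward, postcomp, sliceRetraction, sliceIncl]

/-- The `i`-th simplex of the standard triangulation of `Δⁿ × [0, 1]` (bottom vertices `0, …, i`,
top vertices `i, …, n`), mapped by `τ` followed by the straight-line homotopy from the identity to
`(t, x) ↦ (z, x)`. -/
def prism {n : ℕ} (τ : PreSimplex (ℝ × X) n) (i : Fin (n + 1)) : PreSimplex (ℝ × X) (n + 1) :=
  (τ.precomp i.predAbove).pullToward z (prismWeight i)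

lemma face_prism {n : ℕ} (τ : PreSimplex (ℝ × X) n) (i : Fin (n + 1)) (j : Fin (n + 2)) :
    (τ.prism z i).face j =
      (τ.precomp (i.predAbove ∘ j.succAbove)).pullToward z (prismWeight i ∘ j.succAbove) := by
  rw [prism, face_pullToward, face_eq_precomp, precomp_precomp]

lemma prism_face {n : ℕ} (τ : PreSimplex (ℝ × X) (n + 1)) (j : Fin (n + 2)) (i : Fin (n + 1)) :
    (τ.face j).prism z i =
      (τ.precomp (j.succAbove ∘ i.predAbove)).pullToward z (prismWeight i) := by
  rw [prism, face_eq_precomp, precomp_precomp]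

lemma pullToward_precomp_congr {k n : ℕ} (τ : PreSimplex (ℝ × X) n)
    {c c' : Fin (k + 1) → Fin (n + 1)} (hc : ∀ l, (c l : ℕ) = c' l)
    {w w' : Fin (k + 1) → ℝ} (hw : ∀ l, w l = w' l) :
    (τ.precomp c).pullToward z w = (τ.precomp c').pullToward z w' := by
  rw [funext fun l => Fin.ext (hc l), funext hw]

lemma prism_zero_face_zero {n : ℕ} (τ : PreSimplex (ℝ × X) n) :
    (τ.prism z 0).face 0 = τ.postcomp (sliceRetraction z) := by
  have hw : prismWeight (0 : Fin (n + 1)) ∘ (0 : Fin (n + 2)).succAbove = 1 := by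
    funext l
    simp [prismWeight]
  rw [face_prism, hw, precomp_eq_self (c := Fin.predAbove 0 ∘ Fin.succAbove 0) _
    fun l => Fin.predAbove_zero_succ, pullToward_one]

lemma prism_last_face_last {n : ℕ} (τ : PreSimplex (ℝ × X) n) :
    (τ.prism z (Fin.last n)).face (Fin.last (n + 1)) = τ := by
  have hw : prismWeight (Fin.last n) ∘ (Fin.last (n + 1)).succAbove = 0 := by
    funext l
    simp [prismWeight, l.is_le]
  rw [face_prism, hw,
    precomp_eq_self (c := (Fin.last n).predAbove ∘ (Fin.last (n + 1)).succAbove) _ fun l => by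
    rw [Function.comp_apply, Fin.succAbove_last_apply, Fin.predAbove_last_castSucc],
    pullToward_zero]

lemma prism_face_eq_prism_face {n : ℕ} (τ : PreSimplex (ℝ × X) n) {i i' : Fin (n + 1)}
    {j : Fin (n + 2)} (hj : (j : ℕ) = i + 1) (hi' : (i' : ℕ) = i + 1) :
    (τ.prism z i).face j = (τ.prism z i').face j := by
  rw [face_prism, face_prism]
  refine pullToward_precomp_congr z τ (fun l => ?_) (fun l => ?_)
  · simp only [Function.comp_apply, Fin.val_predAbove_eq_ite, Fin.val_succAbove_eq_ite]
    split_ifs <;> omega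
  · simp only [prismWeight, Function.comp_apply, Fin.val_succAbove_eq_ite]
    split_ifs <;> first | rfl | (exfalso; omega)

lemma prism_face_of_lt {n : ℕ} (τ : PreSimplex (ℝ × X) (n + 1)) {i : Fin (n + 2)}
    {j : Fin (n + 3)} {j' : Fin (n + 2)} {i' : Fin (n + 1)} (hj : (j : ℕ) < i)
    (hj' : (j' : ℕ) = j) (hi' : (i' : ℕ) + 1 = i) :
    (τ.prism z i).face j = (τ.face j').prism z i' := by
  rw [face_prism, prism_face]
  refine pullToward_precomp_congr z τ (fun l => ?_) (fun l => ?_)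
  · simp only [Function.comp_apply, Fin.val_predAbove_eq_ite, Fin.val_succAbove_eq_ite]
    split_ifs <;> omega
  · simp only [prismWeight, Function.comp_apply, Fin.val_succAbove_eq_ite]
    split_ifs <;> first | rfl | (exfalso; omega)

lemma prism_face_of_succ_lt {n : ℕ} (τ : PreSimplex (ℝ × X) (n + 1)) {i : Fin (n + 2)}
    {j : Fin (n + 3)} {j' : Fin (n + 2)} {i' : Fin (n + 1)} (hj : (i : ℕ) + 1 < j)
    (hj' : (j' : ℕ) + 1 = j) (hi' : (i' : ℕ) = i) :
    (τ.prism z i).face j = (τ.face j').prism z i' := by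
  rw [face_prism, prism_face]
  refine pullToward_precomp_congr z τ (fun l => ?_) (fun l => ?_)
  · simp only [Function.comp_apply, Fin.val_predAbove_eq_ite, Fin.val_succAbove_eq_ite]
    split_ifs <;> omega
  · simp only [prismWeight, Function.comp_apply, Fin.val_succAbove_eq_ite]
    split_ifs <;> first | rfl | (exfalso; omega)

end PreSimplex

lemma allowable_prism (F : FilteredSpace X) (p : Set X → ℤ) (z : ℝ) {n : ℕ}
    {τ : PreSimplex (ℝ × X) n} (h : Allowable (F.prodLeft ℝ) (pervProdLeft p) univ τ)
    (i : Fin (n + 1)) :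
    Allowable (F.prodLeft ℝ) (pervProdLeft p) univ (τ.prism z i) := by
  rw [allowable_prodLeft_iff] at h ⊢
  refine h.precomp (Fin.predAbove_right_monotone i) fun u => ?_
  have := suppCard_le_suppCard_simplexMap_predAbove n i u
  push_cast
  omega

section PrismOperator

variable (z : ℝ) {G : Type w} [AddCommGroup G]

lemma neg_one_pow_smul_neg_one_pow_smul {A : Type*} [AddCommGroup A] (x : A) {a b c d : ℕ}
    (h : a + b = c + d + 1) :
    (-1 : ℤ) ^ a • (-1 : ℤ) ^ b • x = -((-1 : ℤ) ^ c • (-1 : ℤ) ^ d • x) := by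
  rw [smul_smul, smul_smul, ← pow_add, ← pow_add, h, pow_succ, mul_neg_one, neg_smul]

lemma sum_prism_faces_diag {n : ℕ} (τ : PreSimplex (ℝ × X) n) (g : G) :
    ∑ q ∈ (Finset.univ : Finset (Fin (n + 1) × Fin (n + 2))).filter
        (fun q => (q.2 : ℕ) = q.1 ∨ (q.2 : ℕ) = q.1 + 1),
      (-1 : ℤ) ^ (q.1 : ℕ) • (-1 : ℤ) ^ (q.2 : ℕ) • Finsupp.single ((τ.prism z q.1).face q.2) g =
    Finsupp.single (τ.postcomp (sliceRetraction z)) g -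
      Finsupp.single τ g := by
  -- `D j` is the face `j` shared by the prism simplices `j - 1` and `j`; the sum telescopes.
  set D : Fin (n + 2) → PreSimplex (ℝ × X) n :=
    fun j => (τ.prism z ((Fin.last n).predAbove j)).face j
  have hD : ∀ i : Fin (n + 1), (τ.prism z i).face i.succ = D i.succ := fun i => by
    by_cases hi : (i : ℕ) < n
    · refine PreSimplex.prism_face_eq_prism_face z τ (Fin.val_succ i) ?_
      rw [Fin.val_predAbove_eq_ite, if_pos (by simp; omega), Fin.val_succ]
    · obtain rfl : i = Fin.last n := Fin.ext (by simp; omega)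
      simp [D, Fin.predAbove_last_apply]
  have hpair : ∀ i : Fin (n + 1), (Finset.univ.filter fun j : Fin (n + 2) =>
      (j : ℕ) = i ∨ (j : ℕ) = i + 1) = {i.castSucc, i.succ} := fun i => by
    ext j
    simp [Fin.ext_iff]
  rw [Finset.sum_filter, Fintype.sum_prod_type]
  simp_rw [← Finset.sum_filter, hpair, Finset.sum_pair Fin.castSucc_lt_succ.ne]
  have hterm : ∀ i : Fin (n + 1),
      (-1 : ℤ) ^ (i : ℕ) • (-1 : ℤ) ^ (i.castSucc : ℕ) •
          Finsupp.single ((τ.prism z i).face i.castSucc) g +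
        (-1 : ℤ) ^ (i : ℕ) • (-1 : ℤ) ^ (i.succ : ℕ) •
          Finsupp.single ((τ.prism z i).face i.succ) g =
      Finsupp.single (D i.castSucc) g - Finsupp.single (D i.succ) g := fun i => by
    rw [smul_smul, smul_smul, ← pow_add, ← pow_add, Fin.val_castSucc, Fin.val_succ,
      Even.neg_one_pow ⟨i, rfl⟩, Odd.neg_one_pow ⟨i, by ring⟩, one_smul, neg_one_zsmul, hD,
      sub_eq_add_neg]
    simp only [D, Fin.predAbove_last_castSucc]
  have hfirst : D 0 = τ.postcomp (sliceRetraction z) := by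
    rw [← PreSimplex.prism_zero_face_zero z τ]
    exact congrArg (fun i => (τ.prism z i).face 0) (Fin.ext (by simp))
  have hlast : D (Fin.last (n + 1)) = τ := by
    rw [← PreSimplex.prism_last_face_last z τ]
    exact congrArg (fun i => (τ.prism z i).face (Fin.last (n + 1)))
      (Fin.ext (by simp))
  have hcast := Fin.sum_univ_castSucc fun j => Finsupp.single (D j) g
  have hsucc := Fin.sum_univ_succ fun j => Finsupp.single (D j) g
  rw [hlast] at hcast
  rw [hfirst] at hsucc
  rw [Finset.sum_congr rfl fun i _ => hterm i, Finset.sum_sub_distrib, sub_eq_sub_iff_add_eq_add,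
    ← hcast, ← hsucc]

lemma sum_prism_faces_offDiag {n : ℕ} (τ : PreSimplex (ℝ × X) (n + 1)) (g : G) :
    ∑ q ∈ (Finset.univ : Finset (Fin (n + 2) × Fin (n + 3))).filter
        (fun q => ¬((q.2 : ℕ) = q.1 ∨ (q.2 : ℕ) = q.1 + 1)),
      (-1 : ℤ) ^ (q.1 : ℕ) • (-1 : ℤ) ^ (q.2 : ℕ) • Finsupp.single ((τ.prism z q.1).face q.2) g =
    -∑ q : Fin (n + 2) × Fin (n + 1),
      (-1 : ℤ) ^ (q.1 : ℕ) • (-1 : ℤ) ^ (q.2 : ℕ) •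
        Finsupp.single ((τ.face q.1).prism z q.2) g := by
  rw [← Finset.sum_neg_distrib]
  -- `(i, j) ↦ (j, i - 1)` if `j < i` and `(j - 1, i)` if `i + 1 < j`; the `min`s only make the
  -- maps total on the diagonal pairs.
  refine Finset.sum_nbij'
    (fun q => if (q.2 : ℕ) < q.1 then (⟨min q.2 (n + 1), by omega⟩, ⟨q.1 - 1, by omega⟩)
      else (⟨q.2 - 1, by omega⟩, ⟨min q.1 n, by omega⟩))
    (fun q => if (q.1 : ℕ) ≤ q.2 then (⟨q.2 + 1, by omega⟩, ⟨q.1, by omega⟩)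
      else (⟨q.2, by omega⟩, ⟨q.1 + 1, by omega⟩))
    (fun _ _ => Finset.mem_univ _) (fun q _ => ?_) (fun q hq => ?_) (fun q _ => ?_)
    (fun q hq => ?_)
  · simp only [Finset.mem_filter, Finset.mem_univ, true_and]
    split_ifs <;> simp <;> omega
  · simp only [Finset.mem_filter, Finset.mem_univ, true_and] at hq
    split_ifs <;> simp only [Prod.ext_iff, Fin.ext_iff] at * <;> omega
  · split_ifs <;> simp only [Prod.ext_iff, Fin.ext_iff] at * <;> omega
  · obtain ⟨i, j⟩ := q
    simp only [Finset.mem_filter, Finset.mem_univ, true_and, not_or] at hq ⊢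
    rcases lt_or_gt_of_ne hq.1 with hji | hij
    · rw [if_pos hji, PreSimplex.prism_face_of_lt z τ hji (j' := ⟨min j (n + 1), by omega⟩)
        (i' := ⟨i - 1, by omega⟩) (by simp; omega) (by simp; omega)]
      exact neg_one_pow_smul_neg_one_pow_smul _ (by simp; omega)
    · rw [if_neg (by omega), PreSimplex.prism_face_of_succ_lt z τ (by omega)
        (j' := ⟨j - 1, by omega⟩) (i' := ⟨min i n, by omega⟩) (by simp; omega) (by simp; omega)]
      exact neg_one_pow_smul_neg_one_pow_smul _ (by simp; omega)

variable (G) in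
def prismOp (m : ℕ) : (filtSys (ℝ × X)).Chains G m →+ (filtSys (ℝ × X)).Chains G (m + 1) :=
  Finsupp.liftAddHom fun τ =>
    ∑ i : Fin (m + 1), (-1 : ℤ) ^ (i : ℕ) • Finsupp.singleAddHom (τ.prism z i)

lemma prismOp_single {m : ℕ} (τ : PreSimplex (ℝ × X) m) (g : G) :
    prismOp z G m (Finsupp.single τ g) =
      ∑ i : Fin (m + 1), (-1 : ℤ) ^ (i : ℕ) • Finsupp.single (τ.prism z i) g := by
  simp [prismOp]

lemma prismOp_mem_suppIn {m : ℕ} {P : PreSimplex (ℝ × X) m → Prop}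
    {Q : PreSimplex (ℝ × X) (m + 1) → Prop} (hPQ : ∀ τ, P τ → ∀ i, Q (τ.prism z i))
    {ξ : (filtSys (ℝ × X)).Chains G m} (hξ : ξ ∈ (filtSys (ℝ × X)).suppIn G P) :
    prismOp z G m ξ ∈ (filtSys (ℝ × X)).suppIn G Q := by
  rw [← Finsupp.sum_single ξ, map_finsuppSum]
  refine AddSubgroup.sum_mem _ fun τ hτ => ?_
  change prismOp z G m (Finsupp.single τ (ξ τ)) ∈ _
  rw [prismOp_single]
  exact AddSubgroup.sum_mem _ fun i _ => AddSubgroup.zsmul_mem _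
    ((filtSys (ℝ × X)).single_mem_suppIn (hPQ τ (hξ τ hτ) i) _) _

lemma bdry_prismOp_single {m : ℕ} (τ : PreSimplex (ℝ × X) m) (g : G) :
    (filtSys (ℝ × X)).bdry G m (prismOp z G m (Finsupp.single τ g)) =
      ∑ q : Fin (m + 1) × Fin (m + 2),
        (-1 : ℤ) ^ (q.1 : ℕ) • (-1 : ℤ) ^ (q.2 : ℕ) •
          Finsupp.single ((τ.prism z q.1).face q.2) g := by
  rw [prismOp_single, map_sum, Fintype.sum_prod_type]
  refine Finset.sum_congr rfl fun i _ => ?_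
  rw [map_zsmul, SimpSystem.bdry_single, Finset.smul_sum]

lemma prismOp_bdry_single {n : ℕ} (τ : PreSimplex (ℝ × X) (n + 1)) (g : G) :
    prismOp z G n ((filtSys (ℝ × X)).bdry G n (Finsupp.single τ g)) =
      ∑ q : Fin (n + 2) × Fin (n + 1),
        (-1 : ℤ) ^ (q.1 : ℕ) • (-1 : ℤ) ^ (q.2 : ℕ) •
        Finsupp.single ((τ.face q.1).prism z q.2) g := by
  rw [SimpSystem.bdry_single, map_sum, Fintype.sum_prod_type]
  refine Finset.sum_congr rfl fun j _ => ?_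
  rw [map_zsmul, prismOp_single, Finset.smul_sum]

lemma bdry_prismOp_zero_single (τ : PreSimplex (ℝ × X) 0) (g : G) :
    (filtSys (ℝ × X)).bdry G 0 (prismOp z G 0 (Finsupp.single τ g)) =
      Finsupp.single (τ.postcomp (sliceRetraction z)) g - Finsupp.single τ g := by
  rw [bdry_prismOp_single, ← sum_prism_faces_diag, Finset.filter_true_of_mem fun q _ => by omega]

lemma bdry_prismOp_add_prismOp_bdry_single {n : ℕ} (τ : PreSimplex (ℝ × X) (n + 1)) (g : G) :
    (filtSys (ℝ × X)).bdry G (n + 1) (prismOp z G (n + 1) (Finsupp.single τ g)) +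
        prismOp z G n ((filtSys (ℝ × X)).bdry G n (Finsupp.single τ g)) =
      Finsupp.single (τ.postcomp (sliceRetraction z)) g - Finsupp.single τ g := by
  rw [bdry_prismOp_single, prismOp_bdry_single, ← Finset.sum_filter_add_sum_filter_not _
    (fun q : Fin (n + 2) × Fin (n + 3) => (q.2 : ℕ) = q.1 ∨ (q.2 : ℕ) = q.1 + 1),
    sum_prism_faces_diag, sum_prism_faces_offDiag]
  abel

lemma bdryFrom_prismOp_of_bdryFrom_eq_zero {m : ℕ} {η : (filtSys (ℝ × X)).Chains G m}
    (hη : (filtSys (ℝ × X)).bdryFrom G m η = 0) :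
    (filtSys (ℝ × X)).bdryFrom G (m + 1) (prismOp z G m η) =
      Finsupp.mapDomain (PreSimplex.postcomp (sliceRetraction z)) η - η := by
  set S : (filtSys (ℝ × X)).Chains G m →+ (filtSys (ℝ × X)).Chains G m :=
    Finsupp.mapDomain.addMonoidHom (PreSimplex.postcomp (sliceRetraction z)) -
      AddMonoidHom.id _
  change _ = S η
  cases m with
  | zero =>
    have key : ((filtSys (ℝ × X)).bdry G 0).comp (prismOp z G 0) = S :=
      Finsupp.addHom_ext fun τ g => by simpa [S] using bdry_prismOp_zero_single z τ g
    exact DFunLike.congr_fun key η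
  | succ n =>
    have key : ((filtSys (ℝ × X)).bdry G (n + 1)).comp (prismOp z G (n + 1)) +
        (prismOp z G n).comp ((filtSys (ℝ × X)).bdry G n) = S :=
      Finsupp.addHom_ext fun τ g => by
        simpa [S] using bdry_prismOp_add_prismOp_bdry_single z τ g
    have := DFunLike.congr_fun key η
    rwa [AddMonoidHom.add_apply, AddMonoidHom.comp_apply, AddMonoidHom.comp_apply,
      show (filtSys (ℝ × X)).bdry G n η = 0 from hη, map_zero, add_zero] at this

end PrismOperator

section ProductWithLine

variable (F : FilteredSpace X) (p : Set X → ℤ) (G : Type w) [AddCommGroup G] (z : ℝ)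

lemma isChainMap_pushChain_sliceIncl :
    IsChainMap ((filtSys X).bdryFrom G) ((filtSys (ℝ × X)).bdryFrom G) (iChains F p G univ)
      (iChains (F.prodLeft ℝ) (pervProdLeft p) G univ) (pushChain (F.prodLeft ℝ) (sliceIncl z) G) :=
  isChainMap_pushChain fun _ _ h => allowable_pushSimp_sliceIncl F p z h

lemma isChainMap_pushChain_snd :
    IsChainMap ((filtSys (ℝ × X)).bdryFrom G) ((filtSys X).bdryFrom G)
      (iChains (F.prodLeft ℝ) (pervProdLeft p) G univ) (iChains F p G univ)
      (pushChain F ContinuousMap.snd G) :=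
  isChainMap_pushChain fun _ _ h => allowable_pushSimp_snd F p h

variable {F p G}

lemma pushChain_snd_pushChain_sliceIncl {m : ℕ} {ξ : (filtSys X).Chains G m}
    (hξ : ξ ∈ iChains F p G univ m) :
    pushChain F ContinuousMap.snd G m (pushChain (F.prodLeft ℝ) (sliceIncl z) G m ξ) = ξ := by
  have hid : PreSimplex.postcomp (ContinuousMap.snd.comp (sliceIncl z)) = @id (PreSimplex X m) :=
    rfl
  rw [pushChain_pushChain, pushChain_eq_mapDomain_postcomp (fun _ => rfl)
    ((filtSys X).suppIn_mono G (fun _ h => h.1) hξ.1), hid, Finsupp.mapDomain_id]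

lemma pushChain_sliceIncl_pushChain_snd {m : ℕ} {η : (filtSys (ℝ × X)).Chains G m}
    (hη : η ∈ iChains (F.prodLeft ℝ) (pervProdLeft p) G univ m) :
    pushChain (F.prodLeft ℝ) (sliceIncl z) G m (pushChain F ContinuousMap.snd G m η) =
      Finsupp.mapDomain (PreSimplex.postcomp (sliceRetraction z)) η := by
  refine (pushChain_pushChain _ _ _ _ G m η).trans (pushChain_eq_mapDomain_postcomp (fun i => ?_)
    ((filtSys (ℝ × X)).suppIn_mono G (fun _ h => h.1) hη.1))
  rw [ContinuousMap.coe_comp, preimage_comp, preimage_sliceIncl_filt, preimage_snd_filt]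

lemma prismOp_mem_iChains {m : ℕ} {η : (filtSys (ℝ × X)).Chains G m}
    (hη : η ∈ iChains (F.prodLeft ℝ) (pervProdLeft p) G univ m)
    (hcyc : (filtSys (ℝ × X)).bdryFrom G m η = 0) :
    prismOp z G m η ∈ iChains (F.prodLeft ℝ) (pervProdLeft p) G univ (m + 1) := by
  refine ⟨prismOp_mem_suppIn z (fun τ hτ i => allowable_prism F p z hτ i) hη.1, ?_⟩
  change (filtSys (ℝ × X)).bdryFrom G (m + 1) (prismOp z G m η) ∈ (filtSys (ℝ × X)).suppIn G
    fun σ => Allowable (F.prodLeft ℝ) (pervProdLeft p) univ σ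
  rw [bdryFrom_prismOp_of_bdryFrom_eq_zero z hcyc]
  exact sub_mem (SimpSystem.mapDomain_mem_suppIn
    (fun τ hτ => allowable_postcomp_sliceRetraction F p z hτ) hη.1) hη.1

lemma pushChain_snd_pushChain_sliceIncl_sub_mem {k : ℕ} {ξ : (filtSys X).Chains G k}
    (hξ : ξ ∈ relCycles ((filtSys X).bdryFrom G) (iChains F p G univ) (fun _ => ⊥) k) :
    pushChain F ContinuousMap.snd G k (pushChain (F.prodLeft ℝ) (sliceIncl z) G k ξ) - ξ ∈
      (iChains F p G univ (k + 1)).map ((filtSys X).bdryFrom G (k + 1)) := by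
  rw [pushChain_snd_pushChain_sliceIncl z (mem_relCycles_bot.1 hξ).1, sub_self]
  exact zero_mem _

lemma pushChain_sliceIncl_pushChain_snd_sub_mem {k : ℕ} {η : (filtSys (ℝ × X)).Chains G k}
    (hη : η ∈ relCycles ((filtSys (ℝ × X)).bdryFrom G)
      (iChains (F.prodLeft ℝ) (pervProdLeft p) G univ) (fun _ => ⊥) k) :
    pushChain (F.prodLeft ℝ) (sliceIncl z) G k (pushChain F ContinuousMap.snd G k η) - η ∈
      (iChains (F.prodLeft ℝ) (pervProdLeft p) G univ (k + 1)).map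
        ((filtSys (ℝ × X)).bdryFrom G (k + 1)) := by
  obtain ⟨hηA, hcyc⟩ := mem_relCycles_bot.1 hη
  rw [pushChain_sliceIncl_pushChain_snd z hηA, ← bdryFrom_prismOp_of_bdryFrom_eq_zero z hcyc]
  exact ⟨_, prismOp_mem_iChains z hηA hcyc, rfl⟩

end ProductWithLine

theorem product_with_line_general
    {X : Type u} [TopologicalSpace X]
    (F : FilteredSpace X)
    (p : Set X → ℤ)
    (G : Type w) [AddCommGroup G] (z : ℝ) (k : ℕ) :
    InducesIso ((filtSys X).bdryFrom G) (fun m => iChains F p G Set.univ m)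
      (fun _ => ⊥) ((filtSys (ℝ × X)).bdryFrom G)
      (fun m => iChains (FilteredSpace.prodLeft ℝ F) (pervProdLeft p) G Set.univ m)
      (fun _ => ⊥) k
      (pushChain (FilteredSpace.prodLeft ℝ F)
        ⟨fun x => (z, x), continuous_const.prodMk continuous_id⟩ G k) ∧
    InducesIso ((filtSys (ℝ × X)).bdryFrom G)
      (fun m => iChains (FilteredSpace.prodLeft ℝ F) (pervProdLeft p) G Set.univ m)
      (fun _ => ⊥)
      ((filtSys X).bdryFrom G) (fun m => iChains F p G Set.univ m) (fun _ => ⊥) k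
      (pushChain F ⟨Prod.snd, continuous_snd⟩ G k) := by
  have hι := isChainMap_pushChain_sliceIncl F p G z
  have hπ := isChainMap_pushChain_snd F p G
  exact ⟨hι.inducesIso hπ (fun _ => pushChain_snd_pushChain_sliceIncl_sub_mem z)
      (fun _ => pushChain_sliceIncl_pushChain_snd_sub_mem z),
    hπ.inducesIso hι (fun _ => pushChain_sliceIncl_pushChain_snd_sub_mem z)
      (fun _ => pushChain_snd_pushChain_sliceIncl_sub_mem z)⟩

theorem product_with_line
    {X : Type u} [TopologicalSpace X] [T2Space X]
    (F : FilteredSpace X) (hX : F.IsStratifiedSpace)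
    (p : Set X → ℤ) (hp : F.IsPerversity p)
    (G : Type w) [AddCommGroup G] (z : ℝ) (k : ℕ) :
    InducesIso ((filtSys X).bdryFrom G) (fun m => iChains F p G Set.univ m)
      (fun _ => ⊥) ((filtSys (ℝ × X)).bdryFrom G)
      (fun m => iChains (FilteredSpace.prodLeft ℝ F) (pervProdLeft p) G Set.univ m)
      (fun _ => ⊥) k
      (pushChain (FilteredSpace.prodLeft ℝ F)
        ⟨fun x => (z, x), continuous_const.prodMk continuous_id⟩ G k) ∧
    InducesIso ((filtSys (ℝ × X)).bdryFrom G)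
      (fun m => iChains (FilteredSpace.prodLeft ℝ F) (pervProdLeft p) G Set.univ m)
      (fun _ => ⊥)
      ((filtSys X).bdryFrom G) (fun m => iChains F p G Set.univ m) (fun _ => ⊥) k
      (pushChain F ⟨Prod.snd, continuous_snd⟩ G k) :=
  product_with_line_general F p G z k

end
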